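/- arXiv:2304.00635 — 4 statements merged into one kernel-verified Lean document; each statement's English description precedes it below -/
import Mathlib

section
/- Let α ∈ (0,1) be irrational of constant type. Then there exists a constant C such that for all integers N ≥ 2: |Σ_{r=1}^{N} (1/r)·(1/{r·α} − 1/(1 − {r·α}))| ≤ C·log N, |Σ_{r=1}^{N} (1/r)·cot(π·r·α)| ≤ C·log N, and |Σ_{r=1}^{N} (1/r)·(1/{{r·α}})| ≤ C·log N. -/
open Finset

/-- Complete quotients of `α`: `a'₀ = α`, `a'_{n+1} = 1/(a'_n - ⌊a'_n⌋)`. -/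
noncomputable def cq (α : ℝ) : ℕ → ℝ
  | 0 => α
  | n + 1 => 1 / (cq α n - (⌊cq α n⌋ : ℝ))

/-- Partial quotients `a_n = ⌊a'_n⌋`. -/
noncomputable def aq (α : ℝ) (n : ℕ) : ℕ := (⌊cq α n⌋).toNat

/-- Quasiperiods: `q₋₂ = 1`, `q₋₁ = 0`, `q_n = a_n q_{n-1} + q_{n-2}` (so `q₀ = 1`, `q₁ = a₁`). -/
noncomputable def qp (α : ℝ) : ℕ → ℕ
  | 0 => 1
  | 1 => aq α 1
  | n + 2 => aq α (n + 2) * qp α (n + 1) + qp α n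

/-- Error periods: `q'_n = a'_n q_{n-1} + q_{n-2}` (so `q'₀ = 1`, `q'₁ = a'₁`). -/
noncomputable def qe (α : ℝ) : ℕ → ℝ
  | 0 => 1
  | 1 => cq α 1
  | n + 2 => cq α (n + 2) * (qp α (n + 1) : ℝ) + (qp α n : ℝ)

/-- Convergent numerators: `p₋₂ = 0`, `p₋₁ = 1`, `p_n = a_n p_{n-1} + p_{n-2}`
(so for `0 < α < 1`, `p₀ = 0`, `p₁ = 1`). -/
noncomputable def pn (α : ℝ) : ℕ → ℕ
  | 0 => 0
  | 1 => 1
  | n + 2 => aq α (n + 2) * pn α (n + 1) + pn α n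

/-- `p'_n = a'_n p_{n-1} + p_{n-2}` (so for `0 < α < 1`, `p'₀ = α`, `p'₁ = 1`). -/
noncomputable def pe (α : ℝ) : ℕ → ℝ
  | 0 => α
  | 1 => 1
  | n + 2 => cq α (n + 2) * (pn α (n + 1) : ℝ) + (pn α n : ℝ)

/-- `ostN α N = max {r : q_r ≤ N}` (quasiperiods satisfy `q_r ≥ r`, so the bound `N` suffices). -/
noncomputable def ostN (α : ℝ) (N : ℕ) : ℕ :=
  Nat.findGreatest (fun r => qp α r ≤ N) N

/-- The remainders of the greedy Ostrowski algorithm: `ostM α N k = M_{n-k}` where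
`M_n = N` and `M_{r-1} = M_r % q_r`. -/
noncomputable def ostM (α : ℝ) (N : ℕ) : ℕ → ℕ
  | 0 => N
  | k + 1 => ostM α N k % qp α (ostN α N - k)

/-- The canonical (greedy) Ostrowski digits: `b_r = ⌊M_r / q_r⌋`. -/
noncomputable def ostDigit (α : ℝ) (N r : ℕ) : ℕ :=
  ostM α N (ostN α N - r) / qp α r
set_option linter.unusedSectionVars false
section CF
variable {α : ℝ} (hirr : Irrational α) (h0 : 0 < α) (h1 : α < 1)

include hirr h0 h1

lemma st13_cq_irr (n : ℕ) : Irrational (cq α n) := by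
  induction n with
  | zero => exact hirr
  | succ n ih =>
    have h2 : Irrational (cq α n - (⌊cq α n⌋ : ℝ)) := ih.sub_intCast _
    rw [show cq α (n+1) = 1 / (cq α n - (⌊cq α n⌋:ℝ)) from rfl, one_div]
    exact h2.inv

lemma st13_fract_cq_pos (n : ℕ) : 0 < cq α n - (⌊cq α n⌋ : ℝ) := by
  have := (st13_cq_irr hirr h0 h1 n).ne_int ⌊cq α n⌋
  have h2 := Int.floor_le (cq α n)
  cases h2.lt_or_eq with
  | inl h => linarith
  | inr h => exact absurd h.symm this

lemma st13_fract_cq_lt_one (n : ℕ) : cq α n - (⌊cq α n⌋ : ℝ) < 1 := by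
  have := Int.lt_floor_add_one (cq α n)
  linarith

lemma st13_cq_gt_one (n : ℕ) : 1 < cq α (n + 1) := by
  rw [show cq α (n+1) = 1 / (cq α n - (⌊cq α n⌋:ℝ)) from rfl]
  exact one_lt_one_div (st13_fract_cq_pos hirr h0 h1 n) (st13_fract_cq_lt_one hirr h0 h1 n)

lemma st13_cq_pos (n : ℕ) : 0 < cq α n := by
  cases n with
  | zero => exact h0
  | succ n => exact lt_trans one_pos (st13_cq_gt_one hirr h0 h1 n)

lemma st13_aq_cast (n : ℕ) : ((aq α n : ℤ)) = ⌊cq α n⌋ := by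
  cases n with
  | zero =>
    have : ⌊cq α 0⌋ = 0 := by
      rw [show cq α 0 = α from rfl]
      exact Int.floor_eq_zero_iff.mpr ⟨h0.le, h1⟩
    simp [aq, this]
  | succ n =>
    have h2 : 1 ≤ ⌊cq α (n+1)⌋ := by
      have := st13_cq_gt_one hirr h0 h1 n
      exact_mod_cast Int.le_floor.mpr (by exact_mod_cast this.le)
    rw [aq, Int.toNat_of_nonneg (by omega)]

lemma st13_aq_cast_real (n : ℕ) : ((aq α n : ℝ)) = (⌊cq α n⌋ : ℝ) := by
  exact_mod_cast congrArg (fun z : ℤ => (z : ℝ)) (st13_aq_cast hirr h0 h1 n)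

lemma st13_aq_pos (n : ℕ) : 1 ≤ aq α (n + 1) := by
  have h2 : (1:ℤ) ≤ ⌊cq α (n+1)⌋ :=
    Int.le_floor.mpr (by exact_mod_cast (st13_cq_gt_one hirr h0 h1 n).le)
  have := st13_aq_cast hirr h0 h1 (n+1)
  omega

lemma st13_cq_rec (n : ℕ) : cq α n = (aq α n : ℝ) + 1 / cq α (n + 1) := by
  have hpos := st13_fract_cq_pos hirr h0 h1 n
  rw [st13_aq_cast_real hirr h0 h1 n,
    show cq α (n+1) = 1 / (cq α n - (⌊cq α n⌋:ℝ)) from rfl, one_div_one_div]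
  ring

lemma st13_cq_lt (n : ℕ) : cq α n < (aq α n : ℝ) + 1 := by
  rw [st13_aq_cast_real hirr h0 h1 n]
  have := st13_fract_cq_lt_one hirr h0 h1 n
  linarith

lemma st13_aq_lt_cq (n : ℕ) : (aq α n : ℝ) < cq α n := by
  rw [st13_aq_cast_real hirr h0 h1 n]
  have := st13_fract_cq_pos hirr h0 h1 n
  linarith

end CF
section CF2
variable {α : ℝ} (hirr : Irrational α) (h0 : 0 < α) (h1 : α < 1)

lemma st13_qp_rec (n : ℕ) : qp α (n+2) = aq α (n+2) * qp α (n+1) + qp α n := rfl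
lemma st13_pn_rec (n : ℕ) : pn α (n+2) = aq α (n+2) * pn α (n+1) + pn α n := rfl
lemma st13_qe_rec (n : ℕ) : qe α (n+2) = cq α (n+2) * (qp α (n+1) : ℝ) + (qp α n : ℝ) := rfl
lemma st13_pe_rec (n : ℕ) : pe α (n+2) = cq α (n+2) * (pn α (n+1) : ℝ) + (pn α n : ℝ) := rfl

include hirr h0 h1

lemma st13_cq_mul (n : ℕ) : cq α n * cq α (n+1) = (aq α n : ℝ) * cq α (n+1) + 1 := by
  have hrec := st13_cq_rec hirr h0 h1 n
  have hne : cq α (n+1) ≠ 0 := (st13_cq_pos hirr h0 h1 (n+1)).ne'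
  rw [hrec]
  field_simp

lemma st13_qp_pos (n : ℕ) : 1 ≤ qp α n := by
  induction n using Nat.strong_induction_on with
  | _ n ih =>
    match n with
    | 0 => exact le_refl _
    | 1 => exact st13_aq_pos hirr h0 h1 0
    | (n+2) =>
      have := ih n (by omega)
      rw [st13_qp_rec]
      nlinarith [st13_aq_pos hirr h0 h1 (n+1), ih (n+1) (by omega)]

lemma st13_qp_succ_ge (n : ℕ) : qp α n ≤ qp α (n + 1) := by
  match n with
  | 0 => exact st13_aq_pos hirr h0 h1 0
  | (n+1) =>
    rw [st13_qp_rec]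
    nlinarith [st13_aq_pos hirr h0 h1 (n+1), st13_qp_pos hirr h0 h1 n,
      st13_qp_pos hirr h0 h1 (n+1)]

lemma st13_qp_ge_index (n : ℕ) : n ≤ qp α n + 1 := by
  induction n using Nat.strong_induction_on with
  | _ n ih =>
    match n with
    | 0 => omega
    | 1 => omega
    | (n+2) =>
      have h2 := ih (n+1) (by omega)
      have h3 := st13_qp_pos hirr h0 h1 n
      rw [st13_qp_rec]
      nlinarith [st13_aq_pos hirr h0 h1 (n+1), st13_qp_pos hirr h0 h1 (n+1)]

lemma st13_qe_succ (n : ℕ) : qe α (n + 1) = cq α (n + 1) * qe α n := by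
  match n with
  | 0 => rw [show qe α 1 = cq α 1 from rfl, show qe α 0 = 1 from rfl]; ring
  | 1 =>
    rw [st13_qe_rec, show qe α 1 = cq α 1 from rfl, show qp α 1 = aq α 1 from rfl,
      show qp α 0 = 1 from rfl]
    push_cast
    linear_combination - st13_cq_mul hirr h0 h1 1
  | (n+2) =>
    rw [st13_qe_rec, st13_qe_rec, st13_qp_rec]
    push_cast
    linear_combination (-(qp α (n+1) : ℝ)) * st13_cq_mul hirr h0 h1 (n+2)

lemma st13_pe_succ (n : ℕ) : pe α (n + 1) = cq α (n + 1) * pe α n := by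
  match n with
  | 0 =>
    rw [show pe α 1 = 1 from rfl, show pe α 0 = α from rfl,
      show cq α 1 = 1 / (cq α 0 - (⌊cq α 0⌋:ℝ)) from rfl]
    have hz : (⌊cq α 0⌋ : ℝ) = 0 := by
      norm_cast
      exact Int.floor_eq_zero_iff.mpr ⟨h0.le, h1⟩
    rw [hz, show cq α 0 = α from rfl]
    field_simp
    rw [sub_zero, div_self h0.ne']
  | 1 =>
    rw [st13_pe_rec, show pe α 1 = 1 from rfl, show pn α 1 = 1 from rfl,
      show pn α 0 = 0 from rfl]
    push_cast
    ring
  | (n+2) =>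
    rw [st13_pe_rec, st13_pe_rec, st13_pn_rec]
    push_cast
    linear_combination (-(pn α (n+1) : ℝ)) * st13_cq_mul hirr h0 h1 (n+2)

lemma st13_qe_pos (n : ℕ) : 0 < qe α n := by
  induction n with
  | zero => rw [show qe α 0 = 1 from rfl]; norm_num
  | succ n ih =>
    rw [st13_qe_succ hirr h0 h1 n]
    exact mul_pos (st13_cq_pos hirr h0 h1 (n+1)) ih

lemma st13_alpha_qe (n : ℕ) : α * qe α n = pe α n := by
  induction n with
  | zero => rw [show qe α 0 = 1 from rfl, show pe α 0 = α from rfl]; ring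
  | succ n ih =>
    rw [st13_qe_succ hirr h0 h1 n, st13_pe_succ hirr h0 h1 n, ← ih]
    ring

lemma st13_det (n : ℕ) :
    (pn α (n+1) : ℤ) * (qp α n : ℤ) - (pn α n : ℤ) * (qp α (n+1) : ℤ) = (-1)^n := by
  induction n using Nat.strong_induction_on with
  | _ n ih =>
    match n with
    | 0 =>
      rw [show pn α 1 = 1 from rfl, show pn α 0 = 0 from rfl, show qp α 0 = 1 from rfl]
      simp
    | 1 =>
      rw [st13_pn_rec, st13_qp_rec, show pn α 1 = 1 from rfl, show pn α 0 = 0 from rfl,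
        show qp α 0 = 1 from rfl, show qp α 1 = aq α 1 from rfl]
      push_cast
      ring
    | (n+2) =>
      have h2 := ih (n+1) (by omega)
      show (pn α (n+1+2) : ℤ) * (qp α (n+2) : ℤ) - (pn α (n+2) : ℤ) * (qp α (n+1+2) : ℤ) = (-1)^(n+2)
      rw [st13_pn_rec (α := α) (n+1), st13_qp_rec (α := α) (n+1), pow_succ]
      push_cast
      push_cast at h2
      linear_combination (-1 : ℤ) * h2

lemma st13_num (n : ℕ) :
    (qp α n : ℝ) * pe α (n+1) - (pn α n : ℝ) * qe α (n+1) = (-1)^n := by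
  match n with
  | 0 =>
    rw [show qp α 0 = 1 from rfl, show pn α 0 = 0 from rfl, show pe α 1 = 1 from rfl]
    simp
  | (n+1) =>
    have hdet := st13_det hirr h0 h1 n
    have hdetR : (pn α (n+1) : ℝ) * (qp α n : ℝ) - (pn α n : ℝ) * (qp α (n+1) : ℝ) = (-1)^n := by
      exact_mod_cast congrArg (fun z : ℤ => (z:ℝ)) hdet
    rw [st13_pe_rec, st13_qe_rec, pow_succ]
    linear_combination (-1 : ℝ) * hdetR

/-- `β n = q_n α - p_n = (-1)^n / qe (n+1)` -/
lemma st13_beta (n : ℕ) :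
    (qp α n : ℝ) * α - (pn α n : ℝ) = (-1)^n / qe α (n+1) := by
  have hqe := st13_qe_pos hirr h0 h1 (n+1)
  have ha := st13_alpha_qe hirr h0 h1 (n+1)
  have hnum := st13_num hirr h0 h1 n
  rw [eq_div_iff hqe.ne']
  linear_combination hnum + (qp α n : ℝ) * ha

lemma st13_qe_gt (n : ℕ) : (qp α (n+1) : ℝ) < qe α (n+1) := by
  have hlt := st13_aq_lt_cq hirr h0 h1 (n+1)
  match n with
  | 0 =>
    rw [show qe α 1 = cq α 1 from rfl, show qp α 1 = aq α 1 from rfl]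
    exact_mod_cast hlt
  | (n+1) =>
    have hlt := st13_aq_lt_cq hirr h0 h1 (n+2)
    have hq1 : (1:ℝ) ≤ (qp α (n+1) : ℝ) := by exact_mod_cast st13_qp_pos hirr h0 h1 (n+1)
    rw [st13_qe_rec, st13_qp_rec]
    push_cast
    nlinarith

lemma st13_qe_lt (n : ℕ) : qe α (n+1) < (qp α (n+1) : ℝ) + (qp α n : ℝ) := by
  match n with
  | 0 =>
    have hlt2 := st13_cq_lt hirr h0 h1 1
    rw [show qe α 1 = cq α 1 from rfl, show qp α 1 = aq α 1 from rfl,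
      show qp α 0 = 1 from rfl]
    push_cast
    linarith
  | (n+1) =>
    have hlt2 := st13_cq_lt hirr h0 h1 (n+2)
    have hq1 : (1:ℝ) ≤ (qp α (n+1) : ℝ) := by exact_mod_cast st13_qp_pos hirr h0 h1 (n+1)
    rw [st13_qe_rec, st13_qp_rec]
    push_cast
    nlinarith

end CF2
section BestApprox
variable {α : ℝ} (hirr : Irrational α) (h0 : 0 < α) (h1 : α < 1)
include hirr h0 h1

lemma st13_best (k : ℕ) (r : ℕ) (hr1 : 1 ≤ r) (hr2 : r < qp α (k+1)) (p : ℤ) :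
    1 / qe α (k+1) ≤ |(r:ℝ) * α - (p:ℝ)| := by
  set pk : ℤ := (pn α k : ℤ) with hpk
  set qk : ℤ := (qp α k : ℤ) with hqk
  set pk1 : ℤ := (pn α (k+1) : ℤ) with hpk1
  set qk1 : ℤ := (qp α (k+1) : ℤ) with hqk1
  set ε : ℤ := (-1)^k with hε
  have he : ε * ε = 1 := by
    rw [hε, ← pow_add, ← two_mul, pow_mul]
    norm_num
  have hd : pk1 * qk - pk * qk1 = ε := st13_det hirr h0 h1 k
  set x : ℤ := ε * ((r:ℤ) * pk1 - p * qk1) with hx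
  set y : ℤ := ε * (p * qk - (r:ℤ) * pk) with hy
  have hxq : x * qk + y * qk1 = (r:ℤ) := by
    rw [hx, hy]
    linear_combination (ε * (r:ℤ)) * hd + (r:ℤ) * he
  have hxp : x * pk + y * pk1 = p := by
    rw [hx, hy]
    linear_combination (ε * p) * hd + p * he
  have hxqR : (x:ℝ) * (qp α k : ℝ) + (y:ℝ) * (qp α (k+1) : ℝ) = (r:ℝ) := by
    exact_mod_cast congrArg (fun z : ℤ => (z:ℝ)) hxq
  have hxpR : (x:ℝ) * (pn α k : ℝ) + (y:ℝ) * (pn α (k+1) : ℝ) = (p:ℝ) := by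
    exact_mod_cast congrArg (fun z : ℤ => (z:ℝ)) hxp
  have hb1 := st13_beta hirr h0 h1 k
  have hb2 := st13_beta hirr h0 h1 (k+1)
  set B : ℝ := 1 / qe α (k+1) with hB
  set B' : ℝ := 1 / qe α (k+2) with hB'
  have hBpos : 0 < B := by
    rw [hB]; exact one_div_pos.mpr (st13_qe_pos hirr h0 h1 (k+1))
  have hB'pos : 0 < B' := by
    rw [hB']; exact one_div_pos.mpr (st13_qe_pos hirr h0 h1 (k+2))
  have heq : (r:ℝ) * α - (p:ℝ) = (-1:ℝ)^k * ((x:ℝ) * B - (y:ℝ) * B') := by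
    rw [hB, hB']
    linear_combination (x:ℝ) * hb1 + (y:ℝ) * hb2 - α * hxqR + hxpR
  have habs : |(r:ℝ) * α - (p:ℝ)| = |(x:ℝ) * B - (y:ℝ) * B'| := by
    rw [heq, abs_mul, abs_pow, abs_neg, abs_one, one_pow, one_mul]
  rw [habs]
  -- integer facts
  have hqkp : (1:ℤ) ≤ qk := by rw [hqk]; exact_mod_cast st13_qp_pos hirr h0 h1 k
  have hqk1p : (1:ℤ) ≤ qk1 := by rw [hqk1]; exact_mod_cast st13_qp_pos hirr h0 h1 (k+1)
  have hrZ : (1:ℤ) ≤ (r:ℤ) := by exact_mod_cast hr1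
  have hr2Z : (r:ℤ) < qk1 := by rw [hqk1]; exact_mod_cast hr2
  clear_value pk qk pk1 qk1 ε x y
  clear hx hy hd he hpk hqk hpk1 hqk1 hε hb1 hb2 heq
  rcases lt_trichotomy y 0 with hy0 | hy0 | hy0
  · -- y < 0
    have hyR : (y:ℝ) ≤ -1 := by exact_mod_cast (by omega : y ≤ -1)
    rcases lt_trichotomy x 0 with hx0 | hx0 | hx0
    · exfalso; nlinarith [mul_le_mul_of_nonneg_right (by omega : x ≤ -1) (by omega : (0:ℤ) ≤ qk),
        mul_le_mul_of_nonneg_right (by omega : y ≤ -1) (by omega : (0:ℤ) ≤ qk1)]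
    · exfalso
      rw [hx0] at hxq
      nlinarith [mul_le_mul_of_nonneg_right (by omega : y ≤ -1) (by omega : (0:ℤ) ≤ qk1)]
    · have hxR : (1:ℝ) ≤ (x:ℝ) := by exact_mod_cast (by omega : 1 ≤ x)
      have : B ≤ (x:ℝ) * B - (y:ℝ) * B' := by nlinarith
      exact this.trans (le_abs_self _)
  · -- y = 0
    rw [hy0] at hxq
    simp only [zero_mul, add_zero] at hxq
    have hx1 : 1 ≤ x := by
      by_contra hcon
      push_neg at hcon
      have h2 : x * qk ≤ 0 := mul_nonpos_of_nonpos_of_nonneg (by omega) (by omega)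
      omega
    have hxR : (1:ℝ) ≤ (x:ℝ) := by exact_mod_cast hx1
    have : B ≤ (x:ℝ) * B - (y:ℝ) * B' := by
      rw [hy0]; push_cast; nlinarith
    exact this.trans (le_abs_self _)
  · -- y > 0
    have hyR : (1:ℝ) ≤ (y:ℝ) := by exact_mod_cast (by omega : 1 ≤ y)
    rcases lt_trichotomy x 0 with hx0 | hx0 | hx0
    · have hxR : (x:ℝ) ≤ -1 := by exact_mod_cast (by omega : x ≤ -1)
      have : B ≤ -((x:ℝ) * B - (y:ℝ) * B') := by nlinarith
      exact this.trans (neg_le_abs _)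
    · exfalso
      rw [hx0] at hxq
      simp only [zero_mul, zero_add] at hxq
      nlinarith [mul_le_mul_of_nonneg_right (by omega : 1 ≤ y) (by omega : (0:ℤ) ≤ qk1)]
    · exfalso
      nlinarith [mul_le_mul_of_nonneg_right (by omega : 1 ≤ x) (by omega : (0:ℤ) ≤ qk),
        mul_le_mul_of_nonneg_right (by omega : 1 ≤ y) (by omega : (0:ℤ) ≤ qk1)]

end BestApprox
section L1

lemma st13_sum_shift (a b c : ℤ) (f : ℤ → ℝ) :
    ∑ m ∈ Finset.Icc a b, f (m + c) = ∑ m ∈ Finset.Icc (a+c) (b+c), f m := by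
  rw [← Finset.image_add_right_Icc, Finset.sum_image (fun x _ y _ h => by omega)]

lemma st13_sum_neg (a b : ℤ) (f : ℤ → ℝ) :
    ∑ m ∈ Finset.Icc a b, f (-m) = ∑ m ∈ Finset.Icc (-b) (-a), f m := by
  refine Finset.sum_nbij' (fun m => -m) (fun m => -m) ?_ ?_ ?_ ?_ ?_ <;>
    simp [Finset.mem_Icc] <;> omega

lemma st13_Hshift (a b c : ℤ) :
    ∑ m ∈ Finset.Icc a b, 1/((m:ℝ)+(c:ℝ)) = ∑ m ∈ Finset.Icc (a+c) (b+c), 1/(m:ℝ) := by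
  rw [← st13_sum_shift a b c (fun m => 1/(m:ℝ))]
  exact Finset.sum_congr rfl (fun m _ => by push_cast; ring_nf)

lemma st13_Hneg (a b c : ℤ) :
    ∑ m ∈ Finset.Icc a b, 1/((m:ℝ)+(c:ℝ)) = -∑ m ∈ Finset.Icc (-b-c) (-a-c), 1/(m:ℝ) := by
  have h1 : ∀ m : ℤ, (1:ℝ)/((m:ℝ)+(c:ℝ)) = -(1/((-m:ℝ)-(c:ℝ))) := by
    intro m
    rw [show (-(m:ℝ))-(c:ℝ) = -((m:ℝ)+(c:ℝ)) by ring, one_div_neg_eq_neg_one_div, neg_neg]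
  rw [Finset.sum_congr rfl (fun m _ => h1 m), Finset.sum_neg_distrib]
  congr 1
  have h2 := st13_sum_neg a b (fun j => 1/((j:ℝ)-(c:ℝ)))
  simp only [Int.cast_neg] at h2
  rw [h2]
  have h3 := st13_Hshift (-b) (-a) (-c)
  simp only [Int.cast_neg] at h3
  rw [show -b + -c = -b-c by ring, show -a + -c = -a-c by ring] at h3
  rw [← h3]
  exact Finset.sum_congr rfl (fun m _ => by rw [sub_eq_add_neg])

end L1
section L1main

lemma st13_E5 (K : ℕ) : ∑ j ∈ Finset.Icc (2:ℤ) (K:ℤ), 1/(j:ℝ) ≤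
    (∑ j ∈ Finset.Icc (5:ℤ) (K:ℤ), 1/(j:ℝ)) + 3/2 := by
  have hsub : Finset.Icc (5:ℤ) (K:ℤ) ⊆ Finset.Icc (2:ℤ) (K:ℤ) :=
    Finset.Icc_subset_Icc (by norm_num) le_rfl
  rw [← Finset.sum_sdiff hsub]
  have hD : ∀ j ∈ Finset.Icc (2:ℤ) (K:ℤ) \ Finset.Icc (5:ℤ) (K:ℤ), 1/(j:ℝ) ≤ 1/2 := by
    intro j hj
    simp only [Finset.mem_sdiff, Finset.mem_Icc] at hj
    have h2 : (2:ℝ) ≤ (j:ℝ) := by exact_mod_cast hj.1.1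
    exact one_div_le_one_div_of_le (by norm_num) h2
  have hcard : (Finset.Icc (2:ℤ) (K:ℤ) \ Finset.Icc (5:ℤ) (K:ℤ)).card ≤ 3 := by
    have hsub2 : Finset.Icc (2:ℤ) (K:ℤ) \ Finset.Icc (5:ℤ) (K:ℤ) ⊆ Finset.Icc (2:ℤ) 4 := by
      intro j hj
      simp only [Finset.mem_sdiff, Finset.mem_Icc] at hj ⊢
      omega
    calc _ ≤ (Finset.Icc (2:ℤ) 4).card := Finset.card_le_card hsub2
    _ = 3 := by rw [Int.card_Icc]; rfl
  have h1 : ∑ j ∈ Finset.Icc (2:ℤ) (K:ℤ) \ Finset.Icc (5:ℤ) (K:ℤ), 1/(j:ℝ) ≤ 3/2 := by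
    calc ∑ j ∈ Finset.Icc (2:ℤ) (K:ℤ) \ Finset.Icc (5:ℤ) (K:ℤ), 1/(j:ℝ)
        ≤ (Finset.Icc (2:ℤ) (K:ℤ) \ Finset.Icc (5:ℤ) (K:ℤ)).card • ((1:ℝ)/2) :=
          Finset.sum_le_card_nsmul _ _ _ hD
      _ ≤ 3 * ((1:ℝ)/2) := by
          rw [nsmul_eq_mul]
          have : ((Finset.Icc (2:ℤ) (K:ℤ) \ Finset.Icc (5:ℤ) (K:ℤ)).card : ℝ) ≤ 3 := by
            exact_mod_cast hcard
          nlinarith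
      _ = 3/2 := by norm_num
  linarith

set_option maxHeartbeats 1000000 in
lemma st13_L1 (q : ℕ) (hq : 1 ≤ q) (s : Finset ℕ) (hcard : s.card = q)
    (mI : ℕ → ℤ) (hinj : Set.InjOn mI ↑s)
    (x : ℕ → ℝ) (δ : ℝ) (hδpos : 0 < δ) (hδhalf : δ ≤ 1/2)
    (hwin : ∀ r ∈ s, -(q:ℝ)/2 ≤ x r ∧ x r < (q:ℝ)/2)
    (hnear : ∀ r ∈ s, (mI r : ℝ) - 1 < x r ∧ x r < (mI r : ℝ) + 2)
    (hlow : ∀ r ∈ s, δ ≤ |x r|) :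
    |∑ r ∈ s, 1 / x r| ≤ 8 / δ := by
  classical
  set K : ℕ := q / 2 with hK
  have hKq1 : 2*K ≤ q := by omega
  have hKq2 : q ≤ 2*K + 1 := by omega
  have hq2 : (q:ℝ)/2 ≤ (K:ℝ) + 1/2 := by
    have : (q:ℝ) ≤ 2*(K:ℝ)+1 := by exact_mod_cast hKq2
    linarith
  have hmem : ∀ r ∈ s, -(K:ℤ)-2 ≤ mI r ∧ mI r ≤ (K:ℤ)+1 := by
    intro r hr
    obtain ⟨hw1, hw2⟩ := hwin r hr
    obtain ⟨hn1, hn2⟩ := hnear r hr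
    constructor
    · have h1 : (-(K:ℝ))-3 < (mI r : ℝ) := by linarith
      have h2 : (-(K:ℤ))-3 < mI r := by exact_mod_cast h1
      omega
    · have h1 : (mI r : ℝ) < (K:ℝ)+2 := by linarith
      have h2 : mI r < (K:ℤ)+2 := by exact_mod_cast h1
      omega
  set W : Finset ℤ := Finset.Icc (-(K:ℤ)-2) ((K:ℤ)+1) with hW
  set t : Finset ℤ := s.image mI with ht
  have htW : t ⊆ W := by
    rw [ht, hW]
    intro m hm
    obtain ⟨r, hr, hrm⟩ := Finset.mem_image.mp hm
    rw [Finset.mem_Icc, ← hrm]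
    exact hmem r hr
  have htcard : t.card = q := by rw [ht, Finset.card_image_of_injOn hinj, hcard]
  have hWcard : W.card = 2*K+4 := by
    rw [hW, Int.card_Icc]
    have : ((K:ℤ)+1+1 - (-(K:ℤ)-2)) = 2*(K:ℤ)+4 := by ring
    rw [this]
    omega
  have hmiss : (W \ t).card ≤ 4 := by
    rw [Finset.card_sdiff_of_subset htW]
    omega
  -- filters
  set sp := s.filter (fun r => 3 ≤ mI r) with hsp
  set sm := s.filter (fun r => mI r ≤ -4) with hsm
  set sc := s.filter (fun r => ¬(3 ≤ mI r) ∧ ¬(mI r ≤ -4)) with hsc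
  have hspsub : ↑sp ⊆ (↑s : Set ℕ) := by rw [hsp]; exact_mod_cast Finset.filter_subset _ _
  have hsmsub : ↑sm ⊆ (↑s : Set ℕ) := by rw [hsm]; exact_mod_cast Finset.filter_subset _ _
  have hscsub : ↑sc ⊆ (↑s : Set ℕ) := by rw [hsc]; exact_mod_cast Finset.filter_subset _ _
  have hsplit : ∑ r ∈ s, 1/x r = ∑ r ∈ sp, 1/x r + ∑ r ∈ sm, 1/x r + ∑ r ∈ sc, 1/x r := by
    have h1 := Finset.sum_filter_add_sum_filter_not s (fun r => 3 ≤ mI r) (fun r => 1/x r)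
    have h2 := Finset.sum_filter_add_sum_filter_not (s.filter (fun r => ¬ 3 ≤ mI r))
      (fun r => mI r ≤ -4) (fun r => 1/x r)
    rw [Finset.filter_filter, Finset.filter_filter] at h2
    have e1 : s.filter (fun r => ¬3 ≤ mI r ∧ mI r ≤ -4) = sm := by
      rw [hsm]; exact Finset.filter_congr (fun r hr => by constructor <;> (intro h; omega))
    have e2 : s.filter (fun r => ¬3 ≤ mI r ∧ ¬mI r ≤ -4) = sc := by rw [hsc]
    rw [e1, e2] at h2
    rw [← h1, ← h2, hsp]
    ring
  -- center part
  have hc6 : sc.card ≤ 6 := by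
    have := Finset.card_le_card_of_injOn (t := Finset.Icc (-3:ℤ) 2) mI ?_ (hinj.mono hscsub)
    · calc sc.card ≤ (Finset.Icc (-3:ℤ) 2).card := this
        _ = 6 := by rw [Int.card_Icc]; rfl
    · intro r hr
      rw [hsc] at hr
      obtain ⟨_, h3, h4⟩ := Finset.mem_filter.mp hr
      rw [Finset.mem_coe, Finset.mem_Icc]
      omega
  have hScu : |∑ r ∈ sc, 1/x r| ≤ 6/δ := by
    calc |∑ r ∈ sc, 1/x r| ≤ ∑ r ∈ sc, |1/x r| := Finset.abs_sum_le_sum_abs _ _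
      _ ≤ ∑ r ∈ sc, 1/δ := by
          apply Finset.sum_le_sum
          intro r hr
          rw [abs_div, abs_one]
          exact one_div_le_one_div_of_le hδpos (hlow r (hscsub hr))
      _ ≤ sc.card • (1/δ) := by rw [Finset.sum_const]
      _ ≤ 6 * (1/δ) := by
          rw [nsmul_eq_mul]
          have h1 : (sc.card : ℝ) ≤ 6 := by exact_mod_cast hc6
          have h2 : (0:ℝ) ≤ 1/δ := by positivity
          nlinarith
      _ = 6/δ := by ring
  -- images
  set tp : Finset ℤ := sp.image mI with htp
  set tm : Finset ℤ := sm.image mI with htm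
  set Ip : Finset ℤ := Finset.Icc (3:ℤ) ((K:ℤ)+1) with hIp
  set Im : Finset ℤ := Finset.Icc (-(K:ℤ)-2) (-4:ℤ) with hIm
  have htpIp : tp ⊆ Ip := by
    rw [htp, hIp]
    intro m hm
    obtain ⟨r, hr, hrm⟩ := Finset.mem_image.mp hm
    obtain ⟨hrs, hr3⟩ := Finset.mem_filter.mp hr
    rw [Finset.mem_Icc, ← hrm]
    exact ⟨hr3, (hmem r hrs).2⟩
  have htmIm : tm ⊆ Im := by
    rw [htm, hIm]
    intro m hm
    obtain ⟨r, hr, hrm⟩ := Finset.mem_image.mp hm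
    obtain ⟨hrs, hr3⟩ := Finset.mem_filter.mp hr
    rw [Finset.mem_Icc, ← hrm]
    exact ⟨(hmem r hrs).1, hr3⟩
  have hmissIp : (Ip \ tp).card ≤ 4 := by
    refine le_trans (Finset.card_le_card ?_) hmiss
    intro m hm
    obtain ⟨hmI, hmt⟩ := Finset.mem_sdiff.mp hm
    rw [Finset.mem_sdiff]
    constructor
    · rw [hW]
      rw [hIp, Finset.mem_Icc] at hmI
      rw [Finset.mem_Icc]
      omega
    · intro hmem2
      apply hmt
      rw [ht] at hmem2
      obtain ⟨r, hr, hrm⟩ := Finset.mem_image.mp hmem2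
      rw [htp]
      apply Finset.mem_image.mpr
      refine ⟨r, ?_, hrm⟩
      rw [hsp, Finset.mem_filter]
      rw [hIp, Finset.mem_Icc] at hmI
      exact ⟨hr, by omega⟩
  have hmissIm : (Im \ tm).card ≤ 4 := by
    refine le_trans (Finset.card_le_card ?_) hmiss
    intro m hm
    obtain ⟨hmI, hmt⟩ := Finset.mem_sdiff.mp hm
    rw [Finset.mem_sdiff]
    constructor
    · rw [hW]
      rw [hIm, Finset.mem_Icc] at hmI
      rw [Finset.mem_Icc]
      omega
    · intro hmem2
      apply hmt
      rw [ht] at hmem2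
      obtain ⟨r, hr, hrm⟩ := Finset.mem_image.mp hmem2
      rw [htm]
      apply Finset.mem_image.mpr
      refine ⟨r, ?_, hrm⟩
      rw [hsm, Finset.mem_filter]
      rw [hIm, Finset.mem_Icc] at hmI
      exact ⟨hr, by omega⟩
  -- facts about elements of sp
  have hsp_facts : ∀ r ∈ sp, (3:ℝ) ≤ (mI r : ℝ) ∧ (mI r:ℝ) - 1 < x r ∧ x r < (mI r:ℝ) + 2 := by
    intro r hr
    obtain ⟨hrs, hr3⟩ := Finset.mem_filter.mp hr
    exact ⟨by exact_mod_cast hr3, (hnear r hrs).1, (hnear r hrs).2⟩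
  have hsm_facts : ∀ r ∈ sm, ((mI r : ℝ) ≤ -4) ∧ (mI r:ℝ) - 1 < x r ∧ x r < (mI r:ℝ) + 2 := by
    intro r hr
    obtain ⟨hrs, hr3⟩ := Finset.mem_filter.mp hr
    exact ⟨by exact_mod_cast hr3, (hnear r hrs).1, (hnear r hrs).2⟩
  have hinjp : ∀ a ∈ sp, ∀ b ∈ sp, mI a = mI b → a = b :=
    fun a ha b hb hab => hinj (hspsub ha) (hspsub hb) hab
  have hinjm : ∀ a ∈ sm, ∀ b ∈ sm, mI a = mI b → a = b :=
    fun a ha b hb hab => hinj (hsmsub ha) (hsmsub hb) hab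
  have himp : ∑ m ∈ tp, 1/((m:ℝ)-1) = ∑ r ∈ sp, 1/((mI r:ℝ)-1) := by
    rw [htp]; exact Finset.sum_image hinjp
  have himp2 : ∑ m ∈ tp, 1/((m:ℝ)+2) = ∑ r ∈ sp, 1/((mI r:ℝ)+2) := by
    rw [htp]; exact Finset.sum_image hinjp
  have himm : ∑ m ∈ tm, 1/((m:ℝ)-1) = ∑ r ∈ sm, 1/((mI r:ℝ)-1) := by
    rw [htm]; exact Finset.sum_image hinjm
  have himm2 : ∑ m ∈ tm, 1/((m:ℝ)+2) = ∑ r ∈ sm, 1/((mI r:ℝ)+2) := by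
    rw [htm]; exact Finset.sum_image hinjm
  -- sum bounds for sp
  have hSpu : ∑ r ∈ sp, 1/x r ≤ ∑ m ∈ Ip, 1/((m:ℝ)-1) := by
    have step1 : ∑ r ∈ sp, 1/x r ≤ ∑ r ∈ sp, 1/((mI r:ℝ)-1) := by
      apply Finset.sum_le_sum
      intro r hr
      obtain ⟨h3, hn1, hn2⟩ := hsp_facts r hr
      exact one_div_le_one_div_of_le (by linarith) hn1.le
    have step3 : ∑ m ∈ tp, 1/((m:ℝ)-1) ≤ ∑ m ∈ Ip, 1/((m:ℝ)-1) := by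
      apply Finset.sum_le_sum_of_subset_of_nonneg htpIp
      intro m hm _
      rw [hIp, Finset.mem_Icc] at hm
      have : (3:ℝ) ≤ (m:ℝ) := by exact_mod_cast hm.1
      have h2 : (0:ℝ) < (m:ℝ)-1 := by linarith
      positivity
    linarith [himp]
  have hSpl : (∑ m ∈ Ip, 1/((m:ℝ)+2)) - 4/5 ≤ ∑ r ∈ sp, 1/x r := by
    have step1 : ∑ r ∈ sp, 1/((mI r:ℝ)+2) ≤ ∑ r ∈ sp, 1/x r := by
      apply Finset.sum_le_sum
      intro r hr
      obtain ⟨h3, hn1, hn2⟩ := hsp_facts r hr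
      exact one_div_le_one_div_of_le (by linarith) hn2.le
    have step2 : ∑ m ∈ Ip \ tp, 1/((m:ℝ)+2) ≤ 4/5 := by
      calc ∑ m ∈ Ip \ tp, 1/((m:ℝ)+2) ≤ (Ip \ tp).card • ((1:ℝ)/5) := by
            apply Finset.sum_le_card_nsmul
            intro m hm
            have hm2 := (Finset.mem_sdiff.mp hm).1
            rw [hIp, Finset.mem_Icc] at hm2
            have : (3:ℝ) ≤ (m:ℝ) := by exact_mod_cast hm2.1
            exact one_div_le_one_div_of_le (by norm_num) (by linarith)
        _ ≤ 4 * ((1:ℝ)/5) := by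
            rw [nsmul_eq_mul]
            have h1 : ((Ip \ tp).card : ℝ) ≤ 4 := by exact_mod_cast hmissIp
            nlinarith
        _ = 4/5 := by norm_num
    have step3 : ∑ m ∈ Ip, 1/((m:ℝ)+2) = ∑ m ∈ Ip \ tp, 1/((m:ℝ)+2) + ∑ m ∈ tp, 1/((m:ℝ)+2) :=
      (Finset.sum_sdiff htpIp).symm
    linarith [himp2]
  -- sum bounds for sm
  have hSmu : ∑ r ∈ sm, 1/x r ≤ (∑ m ∈ Im, 1/((m:ℝ)-1)) + 4/5 := by
    have step1 : ∑ r ∈ sm, 1/x r ≤ ∑ r ∈ sm, 1/((mI r:ℝ)-1) := by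
      apply Finset.sum_le_sum
      intro r hr
      obtain ⟨h3, hn1, hn2⟩ := hsm_facts r hr
      exact one_div_le_one_div_of_neg_of_le (by linarith) hn1.le
    have step2 : -(4/5) ≤ ∑ m ∈ Im \ tm, 1/((m:ℝ)-1) := by
      calc -(4/5 : ℝ) ≤ -(((Im \ tm).card :ℝ) * (1/5)) := by
            have h1 : ((Im \ tm).card : ℝ) ≤ 4 := by exact_mod_cast hmissIm
            nlinarith
        _ = ((Im \ tm).card :ℝ) * (-(1/5)) := by ring
        _ ≤ ∑ m ∈ Im \ tm, 1/((m:ℝ)-1) := by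
            rw [← nsmul_eq_mul]
            apply Finset.card_nsmul_le_sum
            intro m hm
            have hm2 := (Finset.mem_sdiff.mp hm).1
            rw [hIm, Finset.mem_Icc] at hm2
            have hle : (m:ℝ) ≤ -4 := by exact_mod_cast hm2.2
            rw [show -(1/5 : ℝ) = 1/(-5) by norm_num]
            exact one_div_le_one_div_of_neg_of_le (by linarith) (by linarith)
    have step3 : ∑ m ∈ Im, 1/((m:ℝ)-1) = ∑ m ∈ Im \ tm, 1/((m:ℝ)-1) + ∑ m ∈ tm, 1/((m:ℝ)-1) :=
      (Finset.sum_sdiff htmIm).symm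
    linarith [himm]
  have hSml : ∑ m ∈ Im, 1/((m:ℝ)+2) ≤ ∑ r ∈ sm, 1/x r := by
    have step1 : ∑ r ∈ sm, 1/((mI r:ℝ)+2) ≤ ∑ r ∈ sm, 1/x r := by
      apply Finset.sum_le_sum
      intro r hr
      obtain ⟨h3, hn1, hn2⟩ := hsm_facts r hr
      exact one_div_le_one_div_of_neg_of_le (by linarith) hn2.le
    have step2 : ∑ m ∈ Im \ tm, 1/((m:ℝ)+2) ≤ 0 := by
      apply Finset.sum_nonpos
      intro m hm
      have hm2 := (Finset.mem_sdiff.mp hm).1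
      rw [hIm, Finset.mem_Icc] at hm2
      have hle : (m:ℝ) ≤ -4 := by exact_mod_cast hm2.2
      apply div_nonpos_of_nonneg_of_nonpos (by norm_num)
      linarith
    have step3 : ∑ m ∈ Im, 1/((m:ℝ)+2) = ∑ m ∈ Im \ tm, 1/((m:ℝ)+2) + ∑ m ∈ tm, 1/((m:ℝ)+2) :=
      (Finset.sum_sdiff htmIm).symm
    linarith [himm2]
  -- harmonic identities
  have hA1 : ∑ m ∈ Ip, 1/((m:ℝ)-1) = ∑ j ∈ Finset.Icc (2:ℤ) (K:ℤ), 1/(j:ℝ) := by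
    have h := st13_Hshift 3 ((K:ℤ)+1) (-1)
    rw [show (3:ℤ)+(-1) = 2 by ring, show (K:ℤ)+1+(-1) = (K:ℤ) by ring] at h
    rw [hIp, ← h]
    exact Finset.sum_congr rfl (fun m _ => by push_cast; ring_nf)
  have hA2 : ∑ m ∈ Ip, 1/((m:ℝ)+2) = ∑ j ∈ Finset.Icc (5:ℤ) ((K:ℤ)+3), 1/(j:ℝ) := by
    have h := st13_Hshift 3 ((K:ℤ)+1) 2
    rw [show (3:ℤ)+2 = 5 by ring, show (K:ℤ)+1+2 = (K:ℤ)+3 by ring] at h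
    rw [hIp, ← h]
    exact Finset.sum_congr rfl (fun m _ => by push_cast; ring_nf)
  have hA3 : ∑ m ∈ Im, 1/((m:ℝ)-1) = -∑ j ∈ Finset.Icc (5:ℤ) ((K:ℤ)+3), 1/(j:ℝ) := by
    have h := st13_Hneg (-(K:ℤ)-2) (-4) (-1)
    rw [show -(-4:ℤ)-(-1) = 5 by ring, show -(-(K:ℤ)-2)-(-1) = (K:ℤ)+3 by ring] at h
    rw [hIm, ← h]
    exact Finset.sum_congr rfl (fun m _ => by push_cast; ring_nf)
  have hA4 : ∑ m ∈ Im, 1/((m:ℝ)+2) = -∑ j ∈ Finset.Icc (2:ℤ) (K:ℤ), 1/(j:ℝ) := by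
    have h := st13_Hneg (-(K:ℤ)-2) (-4) 2
    rw [show -(-4:ℤ)-2 = 2 by ring, show -(-(K:ℤ)-2)-2 = (K:ℤ) by ring] at h
    rw [hIm, ← h]
    exact Finset.sum_congr rfl (fun m _ => by push_cast; ring_nf)
  have hE5 := st13_E5 K
  have hE6 : ∑ j ∈ Finset.Icc (5:ℤ) (K:ℤ), 1/(j:ℝ) ≤ ∑ j ∈ Finset.Icc (5:ℤ) ((K:ℤ)+3), 1/(j:ℝ) := by
    apply Finset.sum_le_sum_of_subset_of_nonneg (Finset.Icc_subset_Icc le_rfl (by omega))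
    intro j hj _
    rw [Finset.mem_Icc] at hj
    have : (5:ℝ) ≤ (j:ℝ) := by exact_mod_cast hj.1
    positivity
  -- conclusion
  have habs := abs_le.mp hScu
  have hfinal1 : ∑ r ∈ s, 1/x r ≤ 23/10 + 6/δ := by
    rw [hsplit]
    linarith
  have hfinal2 : -(23/10) - 6/δ ≤ ∑ r ∈ s, 1/x r := by
    rw [hsplit]
    linarith
  have hd4 : (4:ℝ) ≤ 2/δ := by
    rw [le_div_iff₀ hδpos]
    linarith
  have hdd : 6/δ + 2/δ = 8/δ := by ring
  rw [abs_le]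
  constructor <;> linarith

end L1main

section Block

lemma st13_round_bounds (y : ℝ) : -(1/2) ≤ y - round y ∧ y - round y < 1/2 := by
  rw [round_eq]
  have h1 := Int.floor_le (y + 1/2)
  have h2 := Int.lt_floor_add_one (y + 1/2)
  constructor <;> [linarith; linarith]

variable {α : ℝ} (hirr : Irrational α) (h0 : 0 < α) (h1 : α < 1)
include hirr h0 h1

lemma st13_qp_growth (A : ℕ) (hA : ∀ r, 1 ≤ r → aq α r ≤ A) (k : ℕ) :
    qp α (k+1) ≤ (A+1) * qp α k := by
  match k with
  | 0 =>
    rw [show qp α 1 = aq α 1 from rfl, show qp α 0 = 1 from rfl]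
    have := hA 1 le_rfl
    omega
  | (k+1) =>
    rw [st13_qp_rec]
    have h2 := hA (k+2) (by omega)
    have h3 := st13_qp_succ_ge hirr h0 h1 k
    have h4 := st13_qp_pos hirr h0 h1 (k+1)
    nlinarith

lemma st13_coprime (k : ℕ) : IsCoprime ((qp α k : ℤ)) ((pn α k : ℤ)) := by
  have hd := st13_det hirr h0 h1 k
  have he : ((-1:ℤ))^k * (-1)^k = 1 := by
    rw [← pow_add, ← two_mul, pow_mul]
    norm_num
  exact ⟨(-1)^k * (pn α (k+1) : ℤ), -((-1)^k * (qp α (k+1) : ℤ)), by linear_combination ((-1:ℤ))^k * hd + he⟩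

lemma st13_block (A : ℕ) (hA : ∀ r, 1 ≤ r → aq α r ≤ A) (k m N : ℕ)
    (hmN : m + qp α k = N) (hN : N < qp α (k+1)) :
    |∑ r ∈ Finset.Icc (m+1) N, 1 / ((r:ℝ)*α - (round ((r:ℝ)*α) : ℤ))|
      ≤ (16*(A:ℝ)+16) * qp α k := by
  classical
  set q : ℕ := qp α k with hqdef
  have hq1 : 1 ≤ q := st13_qp_pos hirr h0 h1 k
  have hqR : (0:ℝ) < q := by exact_mod_cast hq1
  set δ : ℝ := 1/(2*((A:ℝ)+1)) with hδdef
  have hδpos : 0 < δ := by rw [hδdef]; positivity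
  have hδhalf : δ ≤ 1/2 := by
    rw [hδdef]
    rw [div_le_div_iff₀ (by positivity) (by norm_num)]
    have : (0:ℝ) ≤ (A:ℝ) := by positivity
    linarith
  set x : ℕ → ℝ := fun r => (q:ℝ) * ((r:ℝ)*α - (round ((r:ℝ)*α) : ℤ)) with hxdef
  set v : ℝ := (q:ℝ) * (m:ℝ) * α with hvdef
  set mI : ℕ → ℤ := fun r => ((r:ℤ) - (m:ℤ)) * (pn α k : ℤ) - (q:ℤ) * round ((r:ℝ)*α) + ⌊v⌋
    with hmIdef
  set s : Finset ℕ := Finset.Icc (m+1) N with hsdef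
  have hcard : s.card = q := by
    rw [hsdef, Nat.card_Icc]
    omega
  have hrange : ∀ r ∈ s, m + 1 ≤ r ∧ r ≤ N := by
    intro r hr
    rw [hsdef, Finset.mem_Icc] at hr
    exact hr
  -- the fractional part bounds
  have hfr : ∀ r : ℕ, -(1/2 : ℝ) ≤ (r:ℝ)*α - (round ((r:ℝ)*α) : ℤ) ∧
      (r:ℝ)*α - (round ((r:ℝ)*α) : ℤ) < 1/2 := fun r => st13_round_bounds ((r:ℝ)*α)
  have hwin : ∀ r ∈ s, -(q:ℝ)/2 ≤ x r ∧ x r < (q:ℝ)/2 := by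
    intro r _
    obtain ⟨ha, hb⟩ := hfr r
    rw [hxdef]
    constructor
    · have := mul_le_mul_of_nonneg_left ha hqR.le
      calc -(q:ℝ)/2 = (q:ℝ) * (-(1/2)) := by ring
        _ ≤ _ := this
    · have := mul_lt_mul_of_pos_left hb hqR
      calc (q:ℝ) * ((r:ℝ)*α - (round ((r:ℝ)*α) : ℤ)) < (q:ℝ) * (1/2) := this
        _ = (q:ℝ)/2 := by ring
  -- nearness
  have hbeta := st13_beta hirr h0 h1 k
  have hqe1pos := st13_qe_pos hirr h0 h1 (k+1)
  have habsbeta : |(qp α k : ℝ) * α - (pn α k : ℝ)| = 1 / qe α (k+1) := by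
    rw [hbeta, abs_div, abs_pow, abs_neg, abs_one, one_pow, abs_of_pos hqe1pos]
  have hqe_gt : (qp α (k+1) : ℝ) < qe α (k+1) := st13_qe_gt hirr h0 h1 k
  have hqp1R : (q:ℝ) ≤ (qp α (k+1) : ℝ) := by
    exact_mod_cast st13_qp_succ_ge hirr h0 h1 k
  have hsmallbeta : (q:ℝ) * |(qp α k : ℝ) * α - (pn α k : ℝ)| < 1 := by
    rw [habsbeta]
    rw [mul_one_div, div_lt_one hqe1pos]
    linarith
  have hnear : ∀ r ∈ s, (mI r : ℝ) - 1 < x r ∧ x r < (mI r : ℝ) + 2 := by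
    intro r hr
    obtain ⟨hr1, hr2⟩ := hrange r hr
    have heq : x r - (mI r : ℝ) = (v - ⌊v⌋) + ((r:ℝ)-(m:ℝ)) * ((qp α k : ℝ)*α - (pn α k : ℝ)) := by
      rw [hxdef, hmIdef, hvdef]
      push_cast
      ring
    have hfl1 : (0:ℝ) ≤ v - ⌊v⌋ := by linarith [Int.floor_le v]
    have hfl2 : v - ⌊v⌋ < 1 := by linarith [Int.lt_floor_add_one v]
    have hrm : 0 ≤ (r:ℝ)-(m:ℝ) ∧ (r:ℝ)-(m:ℝ) ≤ (q:ℝ) := by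
      constructor <;> [skip; skip] <;>
      · push_cast
        have h2 : (m:ℝ) + 1 ≤ (r:ℝ) := by exact_mod_cast hr1
        have h3 : (r:ℝ) ≤ (N:ℝ) := by exact_mod_cast hr2
        have h4 : (m:ℝ) + (q:ℝ) = (N:ℝ) := by exact_mod_cast hmN
        linarith
    have hgbound : |((r:ℝ)-(m:ℝ)) * ((qp α k : ℝ)*α - (pn α k : ℝ))| < 1 := by
      rw [abs_mul, abs_of_nonneg hrm.1]
      calc ((r:ℝ)-(m:ℝ)) * |(qp α k : ℝ)*α - (pn α k : ℝ)|
          ≤ (q:ℝ) * |(qp α k : ℝ)*α - (pn α k : ℝ)| := by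
            apply mul_le_mul_of_nonneg_right hrm.2 (abs_nonneg _)
        _ < 1 := hsmallbeta
    rw [abs_lt] at hgbound
    constructor <;> linarith
  -- lower bound
  have hlow : ∀ r ∈ s, δ ≤ |x r| := by
    intro r hr
    obtain ⟨hr1, hr2⟩ := hrange r hr
    have hbest := st13_best hirr h0 h1 k r (by omega) (by omega) (round ((r:ℝ)*α))
    have hgrow : (qp α (k+1) : ℝ) ≤ ((A:ℝ)+1) * (q:ℝ) := by
      have := st13_qp_growth hirr h0 h1 A hA k
      push_cast
      exact_mod_cast this
    have hqe_lt : qe α (k+1) < 2*((A:ℝ)+1)*(q:ℝ) := by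
      have h2 := st13_qe_lt hirr h0 h1 k
      have h3 : (qp α k : ℝ) ≤ (qp α (k+1) : ℝ) := hqp1R
      linarith
    have h4 : 1/(2*((A:ℝ)+1)*(q:ℝ)) < 1/qe α (k+1) :=
      one_div_lt_one_div_of_lt hqe1pos hqe_lt
    rw [hxdef, abs_mul, abs_of_pos hqR]
    have h5 : δ = (q:ℝ) * (1/(2*((A:ℝ)+1)*(q:ℝ))) := by
      rw [hδdef]
      field_simp
    rw [h5]
    apply mul_le_mul_of_nonneg_left _ hqR.le
    exact le_trans h4.le hbest
  -- injectivity
  have hinj : Set.InjOn mI ↑s := by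
    intro a ha b hb hab
    simp only [Finset.coe_Icc, Set.mem_Icc, hsdef] at ha hb
    rw [hmIdef] at hab
    simp only at hab
    have hdvd : (q:ℤ) ∣ ((a:ℤ) - (b:ℤ)) * (pn α k : ℤ) := by
      refine ⟨round ((a:ℝ)*α) - round ((b:ℝ)*α), by linarith [hab]⟩
    have hcop := st13_coprime hirr h0 h1 k
    have hdvd2 : (q:ℤ) ∣ ((a:ℤ) - (b:ℤ)) := hcop.dvd_of_dvd_mul_right hdvd
    have hz : (a:ℤ) - (b:ℤ) = 0 := by
      apply Int.eq_zero_of_dvd_of_natAbs_lt_natAbs hdvd2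
      have h8 : ((q:ℤ)).natAbs = q := by omega
      rw [h8]
      omega
    omega
  -- apply L1
  have hL1 := st13_L1 q hq1 s hcard mI hinj x δ hδpos hδhalf hwin hnear hlow
  -- convert
  have hconv : ∑ r ∈ s, 1 / ((r:ℝ)*α - (round ((r:ℝ)*α) : ℤ)) = (q:ℝ) * ∑ r ∈ s, 1/x r := by
    rw [Finset.mul_sum]
    apply Finset.sum_congr rfl
    intro r hr
    simp only [hxdef]
    rcases eq_or_ne ((r:ℝ)*α - (round ((r:ℝ)*α) : ℤ)) 0 with h | h
    · rw [h, mul_zero]; norm_num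
    · field_simp
  rw [hsdef] at hconv
  rw [hconv, abs_mul, abs_of_pos hqR]
  calc (q:ℝ) * |∑ r ∈ s, 1/x r| ≤ (q:ℝ) * (8/δ) :=
      mul_le_mul_of_nonneg_left hL1 hqR.le
    _ = (16*(A:ℝ)+16) * (q:ℝ) := by
        rw [hδdef]
        field_simp
        ring

end Block
section Sbound
variable {α : ℝ} (hirr : Irrational α) (h0 : 0 < α) (h1 : α < 1)
include hirr h0 h1

lemma st13_qp_ge_idx (n : ℕ) (hn : 1 ≤ n) : n ≤ qp α n := by
  induction n using Nat.strong_induction_on with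
  | _ n ih =>
    match n with
    | 1 => exact st13_aq_pos hirr h0 h1 0
    | 2 =>
      rw [st13_qp_rec]
      have := st13_aq_pos hirr h0 h1 1
      have h2 := st13_qp_pos hirr h0 h1 1
      have h3 := st13_qp_pos hirr h0 h1 0
      nlinarith
    | (n+3) =>
      have h2 := ih (n+2) (by omega) (by omega)
      have h3 := st13_qp_pos hirr h0 h1 (n+1)
      have h4 := st13_aq_pos hirr h0 h1 (n+2)
      rw [st13_qp_rec]
      nlinarith

lemma st13_S_bound (A : ℕ) (hA : ∀ r, 1 ≤ r → aq α r ≤ A) (N : ℕ) :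
    |∑ r ∈ Finset.Icc 1 N, 1 / ((r:ℝ)*α - (round ((r:ℝ)*α) : ℤ))|
      ≤ (16*(A:ℝ)+16) * N := by
  induction N using Nat.strong_induction_on with
  | _ N ih =>
    rcases Nat.eq_zero_or_pos N with hN0 | hNpos
    · subst hN0
      simp
    · set k : ℕ := Nat.findGreatest (fun j => qp α j ≤ N) N with hk
      have hk1 : qp α k ≤ N := by
        have h5 : (fun j => qp α j ≤ N) (Nat.findGreatest (fun j => qp α j ≤ N) N) :=
          Nat.findGreatest_spec (P := fun j => qp α j ≤ N) (m := 0) (Nat.zero_le N)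
            (by show qp α 0 ≤ N; rw [show qp α 0 = 1 from rfl]; omega)
        rw [hk]
        exact h5
      have hk2 : N < qp α (k+1) := by
        rcases le_or_gt (k+1) N with h | h
        · by_contra hcon
          push_neg at hcon
          exact Nat.findGreatest_is_greatest (by omega : k < k+1) h hcon
        · have h5 := st13_qp_ge_idx hirr h0 h1 (k+1) (by omega)
          omega
      set M : ℕ := N - qp α k with hM
      have hMN : M + qp α k = N := by omega
      have hMlt : M < N := by
        have := st13_qp_pos hirr h0 h1 k
        omega
      have hsplit : ∑ r ∈ Finset.Icc 1 N, 1 / ((r:ℝ)*α - (round ((r:ℝ)*α) : ℤ)) =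
          (∑ r ∈ Finset.Icc 1 M, 1 / ((r:ℝ)*α - (round ((r:ℝ)*α) : ℤ))) +
          ∑ r ∈ Finset.Icc (M+1) N, 1 / ((r:ℝ)*α - (round ((r:ℝ)*α) : ℤ)) := by
        rw [Finset.Icc_add_one_left_eq_Ioc, show (1:ℕ) = 0+1 from rfl, Finset.Icc_add_one_left_eq_Ioc, Finset.Icc_add_one_left_eq_Ioc]
        exact (Finset.sum_Ioc_consecutive _ (Nat.zero_le M) (by omega)).symm
      have hblock := st13_block hirr h0 h1 A hA k M N hMN hk2
      have hih := ih M hMlt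
      have hMr : (M:ℝ) + (qp α k : ℝ) = (N:ℝ) := by exact_mod_cast hMN
      calc |∑ r ∈ Finset.Icc 1 N, 1 / ((r:ℝ)*α - (round ((r:ℝ)*α) : ℤ))|
          ≤ |∑ r ∈ Finset.Icc 1 M, 1 / ((r:ℝ)*α - (round ((r:ℝ)*α) : ℤ))| +
            |∑ r ∈ Finset.Icc (M+1) N, 1 / ((r:ℝ)*α - (round ((r:ℝ)*α) : ℤ))| := by
            rw [hsplit]; exact abs_add_le _ _
        _ ≤ (16*(A:ℝ)+16) * M + (16*(A:ℝ)+16) * (qp α k) := by linarith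
        _ = (16*(A:ℝ)+16) * N := by rw [← hMr]; ring

end Sbound

section Abel

lemma st13_abel (f : ℕ → ℝ) (N : ℕ) (hN : 1 ≤ N) :
    ∑ r ∈ Finset.Icc 1 N, (1/(r:ℝ)) * f r =
      (∑ r ∈ Finset.Icc 1 N, f r)/(N:ℝ) +
      ∑ r ∈ Finset.Icc 1 (N-1), (∑ i ∈ Finset.Icc 1 r, f i) * (1/(r:ℝ) - 1/((r:ℝ)+1)) := by
  induction N, hN using Nat.le_induction with
  | base => simp
  | succ N hN ih =>
    have hstep : ∑ r ∈ Finset.Icc 1 (N+1), (1/(r:ℝ)) * f r =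
        (∑ r ∈ Finset.Icc 1 N, (1/(r:ℝ)) * f r) + (1/((N:ℝ)+1)) * f (N+1) := by
      rw [Finset.sum_Icc_succ_top (by omega)]
      push_cast
      ring
    have hS : ∑ r ∈ Finset.Icc 1 (N+1), f r = (∑ r ∈ Finset.Icc 1 N, f r) + f (N+1) :=
      Finset.sum_Icc_succ_top (by omega) _
    have hT : ∑ r ∈ Finset.Icc 1 ((N+1)-1), (∑ i ∈ Finset.Icc 1 r, f i) * (1/(r:ℝ) - 1/((r:ℝ)+1))
        = (∑ r ∈ Finset.Icc 1 (N-1), (∑ i ∈ Finset.Icc 1 r, f i) * (1/(r:ℝ) - 1/((r:ℝ)+1)))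
          + (∑ i ∈ Finset.Icc 1 N, f i) * (1/(N:ℝ) - 1/((N:ℝ)+1)) := by
      have e1 : (N+1)-1 = (N-1)+1 := by omega
      rw [e1, Finset.sum_Icc_succ_top (by omega)]
      have e2 : (N-1)+1 = N := by omega
      rw [e2]
    rw [hstep, hS, hT, ih]
    have hNpos : (0:ℝ) < (N:ℝ) := by exact_mod_cast hN
    have hN1pos : (0:ℝ) < (N:ℝ)+1 := by linarith
    push_cast
    field_simp
    ring

lemma st13_harmonic_log (N : ℕ) (hN : 1 ≤ N) :
    ∑ r ∈ Finset.Icc 1 (N-1), 1/((r:ℝ)+1) ≤ Real.log N := by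
  induction N, hN using Nat.le_induction with
  | base => simp
  | succ N hN ih =>
    have e1 : (N+1)-1 = (N-1)+1 := by omega
    rw [e1, Finset.sum_Icc_succ_top (by omega)]
    have e2 : (N-1)+1 = N := by omega
    rw [e2]
    have hNpos : (0:ℝ) < (N:ℝ) := by exact_mod_cast hN
    have hlog : 1/((N:ℝ)+1) ≤ Real.log ((N:ℝ)+1) - Real.log N := by
      have hq : (0:ℝ) < (N:ℝ)/((N:ℝ)+1) := by positivity
      have := Real.log_le_sub_one_of_pos hq
      rw [Real.log_div (by positivity) (by positivity)] at this
      have h3 : (N:ℝ)/((N:ℝ)+1) - 1 = -(1/((N:ℝ)+1)) := by field_simp; ring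
      linarith [this.trans_eq h3]
    have hcast : Real.log ((N:ℝ)+1) = Real.log ((N+1 : ℕ):ℝ) := by push_cast; ring_nf
    linarith [ih, hlog, hcast.le, hcast.ge]

end Abel
section Kernels
open Real

lemma st13_cot_odd (t : ℝ) : Real.cot (-t) = -Real.cot t := by
  rw [Real.cot_eq_cos_div_sin, Real.cot_eq_cos_div_sin, Real.cos_neg, Real.sin_neg, div_neg]

lemma st13_cot_per (y : ℝ) (n : ℤ) : Real.cot (y + n * Real.pi) = Real.cot y := by
  have hp : Function.Periodic Real.cot Real.pi := by
    intro z
    rw [Real.cot_eq_cos_div_sin, Real.cot_eq_cos_div_sin, Real.sin_add_pi, Real.cos_add_pi,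
      neg_div_neg_eq]
  exact (hp.int_mul n) y

lemma st13_cot_near (t : ℝ) (ht : 0 < t) (h2 : t ≤ Real.pi/2) : |Real.cot t - 1/t| ≤ 1 := by
  have hpi4 : Real.pi ≤ 4 := Real.pi_le_four
  have hpi3 : 3 < Real.pi := Real.pi_gt_three
  rcases eq_or_lt_of_le h2 with heq | hlt
  · -- t = π/2
    rw [heq, Real.cot_eq_cos_div_sin, Real.cos_pi_div_two, Real.sin_pi_div_two]
    rw [zero_div, zero_sub, abs_neg]
    rw [abs_of_pos (by positivity)]
    rw [div_le_one (by positivity)]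
    linarith
  · have hs : 0 < Real.sin t := Real.sin_pos_of_pos_of_lt_pi ht (by linarith)
    have hc : 0 < Real.cos t := Real.cos_pos_of_mem_Ioo ⟨by linarith, hlt⟩
    have hub : Real.cot t ≤ 1/t := by
      have htan := Real.lt_tan ht hlt
      rw [Real.tan_eq_sin_div_cos, lt_div_iff₀ hc] at htan
      rw [Real.cot_eq_cos_div_sin, div_le_div_iff₀ hs ht]
      nlinarith
    have hlb : 1/t - t/2 ≤ Real.cot t := by
      rcases le_or_gt (1 - t^2/2) 0 with hneg | hpos
      · have hcotpos : 0 ≤ Real.cot t := by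
          rw [Real.cot_eq_cos_div_sin]
          positivity
        have : 1/t - t/2 ≤ 0 := by
          rw [sub_nonpos, div_le_div_iff₀ ht (by norm_num)]
          nlinarith
        linarith
      · have hsin_le : Real.sin t ≤ t := Real.sin_le ht.le
        have hcos_ge : 1 - t^2/2 ≤ Real.cos t := Real.one_sub_sq_div_two_le_cos
        rw [Real.cot_eq_cos_div_sin,
          show 1/t - t/2 = (1-t^2/2)/t by field_simp,
          div_le_div_iff₀ ht hs]
        nlinarith [mul_le_mul_of_nonneg_left hsin_le hpos.le,
          mul_le_mul_of_nonneg_right hcos_ge ht.le]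
    have htle : t/2 ≤ 1 := by linarith
    rw [abs_le]
    constructor <;> linarith

lemma st13_cot_kernel (u : ℝ) (hu1 : -(1/2:ℝ) ≤ u) (hu2 : u < 1/2) (hu0 : u ≠ 0) :
    |Real.cot (Real.pi * u) - (1/Real.pi) * (1/u)| ≤ 1 := by
  have hpi : 0 < Real.pi := Real.pi_pos
  have he : (1/Real.pi) * (1/u) = 1/(Real.pi * u) := one_div_mul_one_div _ _
  rw [he]
  rcases lt_or_gt_of_ne hu0 with hneg | hpos
  · have ht : 0 < Real.pi * (-u) := by
      apply mul_pos hpi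
      linarith
    have ht2 : Real.pi * (-u) ≤ Real.pi/2 := by
      rw [div_eq_mul_one_div]
      apply mul_le_mul_of_nonneg_left _ hpi.le
      linarith
    have h3 := st13_cot_near (Real.pi * (-u)) ht ht2
    have h4 : Real.cot (Real.pi * u) = - Real.cot (Real.pi * (-u)) := by
      rw [show Real.pi * u = -(Real.pi * (-u)) by ring, st13_cot_odd]
    have h5 : 1/(Real.pi * u) = -(1/(Real.pi * (-u))) := by
      rw [show Real.pi * u = -(Real.pi * (-u)) by ring, one_div_neg_eq_neg_one_div]
    rw [h4, h5, show -Real.cot (Real.pi * (-u)) - -(1/(Real.pi * (-u)))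
      = -(Real.cot (Real.pi * (-u)) - 1/(Real.pi * (-u))) by ring, abs_neg]
    exact h3
  · have ht : 0 < Real.pi * u := mul_pos hpi hpos
    have ht2 : Real.pi * u ≤ Real.pi/2 := by
      rw [div_eq_mul_one_div]
      apply mul_le_mul_of_nonneg_left _ hpi.le
      linarith
    exact st13_cot_near (Real.pi * u) ht ht2

lemma st13_F1_diff (x : ℝ) (hx : Irrational x) :
    |(1/Int.fract x - 1/(1 - Int.fract x)) - 1/(x - (round x : ℤ))| ≤ 2 := by
  have hf0 : 0 < Int.fract x := by
    rw [Int.fract_pos]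
    exact fun h => hx.ne_int ⌊x⌋ h
  have hf1 : Int.fract x < 1 := Int.fract_lt_one x
  have hfract : Int.fract x = x - ⌊x⌋ := (Int.self_sub_floor x).symm
  have hfhalf : Int.fract x ≠ 1/2 := by
    intro h
    have h2 : Irrational (Int.fract x) := by
      rw [hfract]
      exact hx.sub_intCast ⌊x⌋
    rw [h] at h2
    have : ¬ Irrational ((1:ℝ)/2) := by
      rw [show ((1:ℝ)/2) = (((1:ℚ)/2 : ℚ):ℝ) by norm_num]
      exact Rat.not_irrational _
    exact this h2
  rcases lt_or_gt_of_ne hfhalf with hlt | hgt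
  · have hr : round x = ⌊x⌋ := by
      rw [round_eq, Int.floor_eq_iff]
      constructor
      · have := Int.floor_le x
        linarith
      · push_cast
        linarith [hfract]
    rw [hr]
    have hxf : x - (⌊x⌋:ℝ) = Int.fract x := by linarith [hfract]
    rw [hxf, show (1/Int.fract x - 1/(1 - Int.fract x)) - 1/Int.fract x
      = -(1/(1 - Int.fract x)) by ring, abs_neg]
    rw [abs_of_pos (one_div_pos.mpr (by linarith : (0:ℝ) < 1 - Int.fract x))]
    rw [div_le_iff₀ (by linarith : (0:ℝ) < 1 - Int.fract x)]
    linarith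
  · have hr : round x = ⌊x⌋ + 1 := by
      rw [round_eq]
      have : (⌊x⌋:ℤ) + 1 = ⌊x + 1/2⌋ := by
        symm
        rw [Int.floor_eq_iff]
        constructor
        · push_cast
          linarith [hfract]
        · push_cast
          linarith [hfract]
      omega
    rw [hr]
    have hxf : x - ((⌊x⌋ + 1 : ℤ):ℝ) = Int.fract x - 1 := by
      push_cast
      linarith [hfract]
    rw [hxf]
    have h6 : 1/(Int.fract x - 1) = -(1/(1 - Int.fract x)) := by
      rw [show Int.fract x - 1 = -(1 - Int.fract x) by ring, one_div_neg_eq_neg_one_div]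
    rw [h6, show (1/Int.fract x - 1/(1 - Int.fract x)) - -(1/(1 - Int.fract x))
      = 1/Int.fract x by ring]
    rw [abs_of_pos (by positivity)]
    rw [div_le_iff₀ hf0]
    linarith

end Kernels
section Final

lemma st13_harmonic2 (N : ℕ) (hN : 1 ≤ N) :
    ∑ r ∈ Finset.Icc 1 N, 1/(r:ℝ) ≤ 1 + Real.log N := by
  induction N, hN using Nat.le_induction with
  | base => simp
  | succ N hN ih =>
    rw [Finset.sum_Icc_succ_top (by omega)]
    have hNpos : (0:ℝ) < (N:ℝ) := by exact_mod_cast hN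
    have hlog : 1/((N:ℝ)+1) ≤ Real.log ((N:ℝ)+1) - Real.log N := by
      have hq : (0:ℝ) < (N:ℝ)/((N:ℝ)+1) := by positivity
      have h2 := Real.log_le_sub_one_of_pos hq
      rw [Real.log_div (by positivity) (by positivity)] at h2
      have h3 : (N:ℝ)/((N:ℝ)+1) - 1 = -(1/((N:ℝ)+1)) := by field_simp; ring
      linarith [h2.trans_eq h3]
    have hcast : Real.log ((N:ℝ)+1) = Real.log ((N+1 : ℕ):ℝ) := by push_cast; ring_nf
    push_cast
    linarith [ih, hlog, hcast.le, hcast.ge]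

/-- For `α` irrational of constant type, the weighted sums `Σ_{r=1}^N (1/r)·φ(rα)` for
`φ = 1/{x} − 1/(1−{x})`, `cot(πx)`, `1/{{x}}` are all `O(log N)`. -/
theorem stmt13 (α : ℝ) (hirr : Irrational α) (h0 : 0 < α) (h1 : α < 1)
    (hconst : ∃ A : ℕ, ∀ r : ℕ, 1 ≤ r → aq α r ≤ A) :
    ∃ C : ℝ, ∀ N : ℕ, 2 ≤ N →
      |∑ r ∈ Finset.Icc 1 N, (1 / (r : ℝ)) *
        (1 / Int.fract ((r : ℝ) * α) - 1 / (1 - Int.fract ((r : ℝ) * α)))| ≤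
          C * Real.log N ∧
      |∑ r ∈ Finset.Icc 1 N, (1 / (r : ℝ)) * Real.cot (Real.pi * (r : ℝ) * α)| ≤
        C * Real.log N ∧
      |∑ r ∈ Finset.Icc 1 N, (1 / (r : ℝ)) *
        (1 / ((r : ℝ) * α - (round ((r : ℝ) * α) : ℤ)))| ≤ C * Real.log N := by
  obtain ⟨A, hA⟩ := hconst
  set CA : ℝ := 16*(A:ℝ)+16 with hCAdef
  have hCA0 : (0:ℝ) ≤ CA := by rw [hCAdef]; positivity
  set g : ℕ → ℝ := fun r => 1 / ((r:ℝ)*α - (round ((r:ℝ)*α) : ℤ)) with hgdef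
  have hS : ∀ n : ℕ, |∑ r ∈ Finset.Icc 1 n, g r| ≤ CA * n := by
    intro n
    exact st13_S_bound hirr h0 h1 A hA n
  -- T3 bound
  have hT3 : ∀ N : ℕ, 1 ≤ N →
      |∑ r ∈ Finset.Icc 1 N, (1/(r:ℝ)) * g r| ≤ CA * (1 + Real.log N) := by
    intro N hN
    have habel := st13_abel g N hN
    rw [habel]
    have hNpos : (0:ℝ) < (N:ℝ) := by exact_mod_cast hN
    have hpart1 : |(∑ r ∈ Finset.Icc 1 N, g r)/(N:ℝ)| ≤ CA := by
      rw [abs_div, abs_of_pos hNpos, div_le_iff₀ hNpos]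
      exact hS N
    have hpart2 : |∑ r ∈ Finset.Icc 1 (N-1),
        (∑ i ∈ Finset.Icc 1 r, g i) * (1/(r:ℝ) - 1/((r:ℝ)+1))| ≤ CA * Real.log N := by
      calc |∑ r ∈ Finset.Icc 1 (N-1), (∑ i ∈ Finset.Icc 1 r, g i) * (1/(r:ℝ) - 1/((r:ℝ)+1))|
          ≤ ∑ r ∈ Finset.Icc 1 (N-1), |(∑ i ∈ Finset.Icc 1 r, g i) * (1/(r:ℝ) - 1/((r:ℝ)+1))| :=
            Finset.abs_sum_le_sum_abs _ _
        _ ≤ ∑ r ∈ Finset.Icc 1 (N-1), CA * (1/((r:ℝ)+1)) := by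
            apply Finset.sum_le_sum
            intro r hr
            rw [Finset.mem_Icc] at hr
            have hr1 : (1:ℝ) ≤ (r:ℝ) := by exact_mod_cast hr.1
            have hrpos : (0:ℝ) < (r:ℝ) := by linarith
            have hw : (0:ℝ) ≤ 1/(r:ℝ) - 1/((r:ℝ)+1) := by
              rw [sub_nonneg]
              exact one_div_le_one_div_of_le hrpos (by linarith)
            rw [abs_mul, abs_of_nonneg hw]
            have hid : CA * (1/((r:ℝ)+1)) = (CA * (r:ℝ)) * (1/(r:ℝ) - 1/((r:ℝ)+1)) := by
              field_simp
              ring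
            rw [hid]
            apply mul_le_mul_of_nonneg_right _ hw
            exact hS r
        _ = CA * ∑ r ∈ Finset.Icc 1 (N-1), 1/((r:ℝ)+1) := by rw [Finset.mul_sum]
        _ ≤ CA * Real.log N := by
            apply mul_le_mul_of_nonneg_left _ hCA0
            exact st13_harmonic_log N hN
    calc |(∑ r ∈ Finset.Icc 1 N, g r)/(N:ℝ) + ∑ r ∈ Finset.Icc 1 (N-1),
        (∑ i ∈ Finset.Icc 1 r, g i) * (1/(r:ℝ) - 1/((r:ℝ)+1))|
        ≤ |(∑ r ∈ Finset.Icc 1 N, g r)/(N:ℝ)| + |∑ r ∈ Finset.Icc 1 (N-1),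
          (∑ i ∈ Finset.Icc 1 r, g i) * (1/(r:ℝ) - 1/((r:ℝ)+1))| := abs_add_le _ _
      _ ≤ CA + CA * Real.log N := by linarith
      _ = CA * (1 + Real.log N) := by ring
  -- pointwise facts for r ≥ 1
  have hirr_r : ∀ r : ℕ, 1 ≤ r → Irrational ((r:ℝ)*α) := by
    intro r hr
    exact hirr.natCast_mul (by omega)
  have hu_facts : ∀ r : ℕ, 1 ≤ r →
      ((r:ℝ)*α - (round ((r:ℝ)*α) : ℤ)) ≠ 0 := by
    intro r hr
    have h2 : Irrational ((r:ℝ)*α - (round ((r:ℝ)*α) : ℤ)) :=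
      (hirr_r r hr).sub_intCast _
    intro hcon
    have := h2.ne_int 0
    apply this
    rw [hcon]
    norm_num
  -- kernel 1 comparison
  have hK1 : ∀ r : ℕ, 1 ≤ r →
      |(1 / Int.fract ((r:ℝ)*α) - 1 / (1 - Int.fract ((r:ℝ)*α))) - g r| ≤ 2 := by
    intro r hr
    exact st13_F1_diff ((r:ℝ)*α) (hirr_r r hr)
  -- kernel 2 comparison
  have hK2 : ∀ r : ℕ, 1 ≤ r →
      |Real.cot (Real.pi * (r:ℝ) * α) - (1/Real.pi) * g r| ≤ 1 := by
    intro r hr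
    set u : ℝ := (r:ℝ)*α - (round ((r:ℝ)*α) : ℤ) with hudef
    have hub := st13_round_bounds ((r:ℝ)*α)
    have hcotper : Real.cot (Real.pi * (r:ℝ) * α) = Real.cot (Real.pi * u) := by
      rw [show Real.pi * (r:ℝ) * α = (Real.pi * u) + (round ((r:ℝ)*α)) * Real.pi by
        rw [hudef]; push_cast; ring]
      exact st13_cot_per _ _
    rw [hcotper, hgdef]
    simp only
    rw [← hudef]
    exact st13_cot_kernel u hub.1 hub.2 (hu_facts r hr)
  -- choose C
  refine ⟨3*(CA + 2), ?_⟩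
  intro N hN2
  have hN1 : 1 ≤ N := by omega
  have hNR : (2:ℝ) ≤ (N:ℝ) := by exact_mod_cast hN2
  have hlog2 : (1/2:ℝ) < Real.log 2 := by
    have := Real.log_two_gt_d9
    linarith
  have hlogN : Real.log 2 ≤ Real.log N := Real.log_le_log (by norm_num) hNR
  have hlogNpos : (0:ℝ) < Real.log N := by linarith
  have hone : (1:ℝ) ≤ 2 * Real.log N := by linarith
  have hhar := st13_harmonic2 N hN1
  have hharpos : (0:ℝ) ≤ ∑ r ∈ Finset.Icc 1 N, 1/(r:ℝ) := by
    apply Finset.sum_nonneg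
    intro r hr
    positivity
  have hT3N := hT3 N hN1
  have hkey : CA * (1 + Real.log N) + 2*(1 + Real.log N) ≤ 3*(CA + 2) * Real.log N := by
    have h9 : (1:ℝ) + Real.log N ≤ 3 * Real.log N := by linarith
    nlinarith
  refine ⟨?_, ?_, ?_⟩
  · -- first sum
    have hdiff : ∑ r ∈ Finset.Icc 1 N, (1/(r:ℝ)) *
        (1 / Int.fract ((r:ℝ)*α) - 1 / (1 - Int.fract ((r:ℝ)*α)))
        - ∑ r ∈ Finset.Icc 1 N, (1/(r:ℝ)) * g r
        = ∑ r ∈ Finset.Icc 1 N, (1/(r:ℝ)) *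
          ((1 / Int.fract ((r:ℝ)*α) - 1 / (1 - Int.fract ((r:ℝ)*α))) - g r) := by
      rw [← Finset.sum_sub_distrib]
      apply Finset.sum_congr rfl
      intro r _
      ring
    have hdbound : |∑ r ∈ Finset.Icc 1 N, (1/(r:ℝ)) *
        ((1 / Int.fract ((r:ℝ)*α) - 1 / (1 - Int.fract ((r:ℝ)*α))) - g r)|
        ≤ 2 * (1 + Real.log N) := by
      calc |∑ r ∈ Finset.Icc 1 N, (1/(r:ℝ)) *
          ((1 / Int.fract ((r:ℝ)*α) - 1 / (1 - Int.fract ((r:ℝ)*α))) - g r)|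
          ≤ ∑ r ∈ Finset.Icc 1 N, |(1/(r:ℝ)) *
            ((1 / Int.fract ((r:ℝ)*α) - 1 / (1 - Int.fract ((r:ℝ)*α))) - g r)| :=
            Finset.abs_sum_le_sum_abs _ _
        _ ≤ ∑ r ∈ Finset.Icc 1 N, (1/(r:ℝ)) * 2 := by
            apply Finset.sum_le_sum
            intro r hr
            rw [Finset.mem_Icc] at hr
            have hr1 : (1:ℝ) ≤ (r:ℝ) := by exact_mod_cast hr.1
            rw [abs_mul, abs_of_nonneg (by positivity : (0:ℝ) ≤ 1/(r:ℝ))]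
            apply mul_le_mul_of_nonneg_left _ (by positivity : (0:ℝ) ≤ 1/(r:ℝ))
            exact hK1 r hr.1
        _ = 2 * ∑ r ∈ Finset.Icc 1 N, 1/(r:ℝ) := by
            rw [Finset.mul_sum]
            apply Finset.sum_congr rfl
            intro r _
            ring
        _ ≤ 2 * (1 + Real.log N) := by linarith
    calc |∑ r ∈ Finset.Icc 1 N, (1/(r:ℝ)) *
        (1 / Int.fract ((r:ℝ)*α) - 1 / (1 - Int.fract ((r:ℝ)*α)))|
        ≤ |∑ r ∈ Finset.Icc 1 N, (1/(r:ℝ)) * g r| + 2*(1 + Real.log N) := by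
          have h7 := abs_sub_abs_le_abs_sub
            (∑ r ∈ Finset.Icc 1 N, (1/(r:ℝ)) *
              (1 / Int.fract ((r:ℝ)*α) - 1 / (1 - Int.fract ((r:ℝ)*α))))
            (∑ r ∈ Finset.Icc 1 N, (1/(r:ℝ)) * g r)
          rw [hdiff] at h7
          linarith [hdbound]
      _ ≤ CA * (1 + Real.log N) + 2*(1 + Real.log N) := by linarith
      _ ≤ 3*(CA + 2) * Real.log N := hkey
  · -- second sum (cot)
    have hdiff : ∑ r ∈ Finset.Icc 1 N, (1/(r:ℝ)) * Real.cot (Real.pi * (r:ℝ) * α)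
        - ∑ r ∈ Finset.Icc 1 N, (1/(r:ℝ)) * ((1/Real.pi) * g r)
        = ∑ r ∈ Finset.Icc 1 N, (1/(r:ℝ)) *
          (Real.cot (Real.pi * (r:ℝ) * α) - (1/Real.pi) * g r) := by
      rw [← Finset.sum_sub_distrib]
      apply Finset.sum_congr rfl
      intro r _
      ring
    have hdbound : |∑ r ∈ Finset.Icc 1 N, (1/(r:ℝ)) *
        (Real.cot (Real.pi * (r:ℝ) * α) - (1/Real.pi) * g r)| ≤ 1 + Real.log N := by
      calc |∑ r ∈ Finset.Icc 1 N, (1/(r:ℝ)) *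
          (Real.cot (Real.pi * (r:ℝ) * α) - (1/Real.pi) * g r)|
          ≤ ∑ r ∈ Finset.Icc 1 N, |(1/(r:ℝ)) *
            (Real.cot (Real.pi * (r:ℝ) * α) - (1/Real.pi) * g r)| :=
            Finset.abs_sum_le_sum_abs _ _
        _ ≤ ∑ r ∈ Finset.Icc 1 N, (1/(r:ℝ)) * 1 := by
            apply Finset.sum_le_sum
            intro r hr
            rw [Finset.mem_Icc] at hr
            rw [abs_mul, abs_of_nonneg (by positivity : (0:ℝ) ≤ 1/(r:ℝ))]
            apply mul_le_mul_of_nonneg_left _ (by positivity : (0:ℝ) ≤ 1/(r:ℝ))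
            exact hK2 r hr.1
        _ = ∑ r ∈ Finset.Icc 1 N, 1/(r:ℝ) := by
            apply Finset.sum_congr rfl
            intro r _
            ring
        _ ≤ 1 + Real.log N := hhar
    have hpibd : |∑ r ∈ Finset.Icc 1 N, (1/(r:ℝ)) * ((1/Real.pi) * g r)|
        ≤ CA * (1 + Real.log N) := by
      have hpi1 : (1:ℝ) ≤ Real.pi := by linarith [Real.pi_gt_three]
      have he : ∑ r ∈ Finset.Icc 1 N, (1/(r:ℝ)) * ((1/Real.pi) * g r)
          = (1/Real.pi) * ∑ r ∈ Finset.Icc 1 N, (1/(r:ℝ)) * g r := by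
        rw [Finset.mul_sum]
        apply Finset.sum_congr rfl
        intro r _
        ring
      rw [he, abs_mul, abs_of_pos (by positivity : (0:ℝ) < 1/Real.pi)]
      have h8 : (1:ℝ)/Real.pi ≤ 1 := by
        rw [div_le_one (by positivity)]
        exact hpi1
      have h9 := hT3 N hN1
      have h10 : (0:ℝ) ≤ |∑ r ∈ Finset.Icc 1 N, (1/(r:ℝ)) * g r| := abs_nonneg _
      nlinarith
    calc |∑ r ∈ Finset.Icc 1 N, (1/(r:ℝ)) * Real.cot (Real.pi * (r:ℝ) * α)|
        ≤ |∑ r ∈ Finset.Icc 1 N, (1/(r:ℝ)) * ((1/Real.pi) * g r)| + (1 + Real.log N) := by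
          have h7 := abs_sub_abs_le_abs_sub
            (∑ r ∈ Finset.Icc 1 N, (1/(r:ℝ)) * Real.cot (Real.pi * (r:ℝ) * α))
            (∑ r ∈ Finset.Icc 1 N, (1/(r:ℝ)) * ((1/Real.pi) * g r))
          rw [hdiff] at h7
          linarith [hdbound]
      _ ≤ CA * (1 + Real.log N) + (1 + Real.log N) := by linarith
      _ ≤ CA * (1 + Real.log N) + 2 * (1 + Real.log N) := by
          have : (0:ℝ) ≤ 1 + Real.log N := by linarith
          linarith
      _ ≤ 3*(CA + 2) * Real.log N := hkey
  · -- third sum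
    calc |∑ r ∈ Finset.Icc 1 N, (1/(r:ℝ)) * (1 / ((r:ℝ)*α - (round ((r:ℝ)*α) : ℤ)))|
        ≤ CA * (1 + Real.log N) := hT3 N hN1
      _ ≤ CA * (1 + Real.log N) + 2 * (1 + Real.log N) := by
          have : (0:ℝ) ≤ 1 + Real.log N := by linarith
          linarith
      _ ≤ 3*(CA + 2) * Real.log N := hkey

end Final
end

section
/- Let α, M be real numbers and N ≥ 1 an integer. Let ψ : ℝ → ℂ be 1-periodic with |ψ(x) − ψ(y)| ≤ C·‖x − y‖ for all x, y ∈ ℝ and |ψ(x)| ≤ K for all x, and let φ : ℝ → ℂ satisfy |Σ_{r=1}^{k} φ(r·α)| ≤ B·k for every integer 1 ≤ k ≤ N. Then |Σ_{r=1}^{N} ψ(r·M·α)·φ(r·α)| ≤ B·N·( (1/2)·C·‖M·α‖·(N − 1) + K ). -/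
/-!
Summation by parts: with `Φ k = Σ_{r ≤ k} φ(rα)`, the sum equals
`ψ(NMα) Φ N - Σ_{k < N} (ψ((k+1)Mα) - ψ(kMα)) Φ k`. Each increment of `ψ` is at most `C‖Mα‖`
by the Lipschitz bound, and `‖Φ k‖ ≤ B k`, so the correction is at most
`C‖Mα‖ B (1 + ⋯ + (N-1)) = C‖Mα‖ B N (N-1)/2`.
-/

open Finset

lemma sum_Icc_one_eq_sum_range {M : Type*} [AddCommMonoid M] (h : ℕ → M) (n : ℕ) :
    ∑ r ∈ Icc 1 n, h r = ∑ i ∈ range n, h (i + 1) := by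
  rw [← Ico_add_one_right_eq_Icc, sum_Ico_eq_sum_range]
  simp only [add_tsub_cancel_right, add_comm 1]

lemma sum_range_cast_add_one_mul_two {R : Type*} [CommSemiring R] (n : ℕ) :
    (∑ i ∈ range n, ((i : R) + 1)) * 2 = n * (n + 1) := by
  have := sum_range_id_mul_two (n + 1)
  rw [sum_range_succ', add_zero, add_tsub_cancel_right, mul_comm (n + 1)] at this
  exact_mod_cast congrArg (Nat.cast (R := R)) this

lemma norm_sum_range_mul_le_of_norm_partial_sum_le {E : Type*} [SeminormedRing E]
    (f g : ℕ → E) {N : ℕ} {L K B : ℝ} (hstep : ∀ i, ‖f (i + 1) - f i‖ ≤ L)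
    (hbound : ∀ i, ‖f i‖ ≤ K)
    (hpartial : ∀ m, 1 ≤ m → m ≤ N → ‖∑ j ∈ range m, g j‖ ≤ B * m) :
    ‖∑ i ∈ range N, f i * g i‖ ≤ B * N * (1 / 2 * L * (N - 1) + K) := by
  obtain _ | n := N
  · simp
  set G : ℕ → E := fun m => ∑ j ∈ range m, g j
  have hL : 0 ≤ L := (norm_nonneg _).trans (hstep 0)
  have hK : 0 ≤ K := (norm_nonneg _).trans (hbound 0)
  have hlast : ‖f n * G (n + 1)‖ ≤ K * (B * (n + 1 : ℕ)) :=
    (norm_mul_le _ _).trans <|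
      mul_le_mul (hbound n) (hpartial _ le_add_self le_rfl) (norm_nonneg _) hK
  have hinc : ‖∑ i ∈ range n, (f (i + 1) - f i) * G (i + 1)‖ ≤
      ∑ i ∈ range n, L * (B * (i + 1 : ℕ)) := by
    refine (norm_sum_le _ _).trans (sum_le_sum fun i hi => ?_)
    have hi : i + 1 ≤ n + 1 := by simpa using (mem_range.mp hi).le
    exact (norm_mul_le _ _).trans <|
      mul_le_mul (hstep i) (hpartial _ le_add_self hi) (norm_nonneg _) hL
  have hgauss := sum_range_cast_add_one_mul_two (R := ℝ) n
  have hsum : ∑ i ∈ range n, L * (B * (i + 1 : ℕ)) = L * B * ((n : ℝ) * (n + 1) / 2) := by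
    rw [← hgauss, mul_div_cancel_right₀ _ two_ne_zero, mul_sum]
    exact sum_congr rfl fun i _ => by push_cast; ring
  have habel := sum_range_by_parts f g (n + 1)
  simp only [smul_eq_mul, add_tsub_cancel_right] at habel
  calc ‖∑ i ∈ range (n + 1), f i * g i‖
      ≤ ‖f n * G (n + 1)‖ + ‖∑ i ∈ range n, (f (i + 1) - f i) * G (i + 1)‖ := by
        rw [habel]; exact norm_sub_le _ _
    _ ≤ K * (B * (n + 1 : ℕ)) + L * B * ((n : ℝ) * (n + 1) / 2) := by
        rw [← hsum]; exact add_le_add hlast hinc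
    _ = B * (n + 1 : ℕ) * (1 / 2 * L * ((n + 1 : ℕ) - 1) + K) := by push_cast; ring

theorem stmt14_general (α M : ℝ) (N : ℕ)
    (ψ : ℝ → ℂ) (C K B : ℝ)
    (hlip : ∀ x y : ℝ, ‖ψ x - ψ y‖ ≤ C * |x - y - (round (x - y) : ℤ)|)
    (hK : ∀ x : ℝ, ‖ψ x‖ ≤ K)
    (φ : ℝ → ℂ)
    (hφ : ∀ k : ℕ, 1 ≤ k → k ≤ N →
      ‖∑ r ∈ Finset.Icc 1 k, φ ((r : ℝ) * α)‖ ≤ B * k) :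
    ‖∑ r ∈ Finset.Icc 1 N, ψ ((r : ℝ) * M * α) * φ ((r : ℝ) * α)‖ ≤
      B * N * ((1 / 2) * C * |M * α - (round (M * α) : ℤ)| * ((N : ℝ) - 1) + K) := by
  have hstep : ∀ i : ℕ, ‖ψ (((i + 1 + 1 : ℕ) : ℝ) * M * α) - ψ (((i + 1 : ℕ) : ℝ) * M * α)‖ ≤
      C * |M * α - (round (M * α) : ℤ)| := by
    intro i
    have h := hlip (((i + 1 + 1 : ℕ) : ℝ) * M * α) (((i + 1 : ℕ) : ℝ) * M * α)
    rwa [show ((i + 1 + 1 : ℕ) : ℝ) * M * α - ((i + 1 : ℕ) : ℝ) * M * α = M * α by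
      push_cast; ring] at h
  rw [sum_Icc_one_eq_sum_range, mul_assoc (1 / 2 : ℝ) C]
  exact norm_sum_range_mul_le_of_norm_partial_sum_le _ _ hstep (fun _ => hK _)
    fun m h1 h2 => by simpa only [sum_Icc_one_eq_sum_range] using hφ m h1 h2

/-- Partial Birkhoff summation: if `ψ : ℝ → ℂ` is `1`-periodic, Lipschitz with constant `C`
for the distance to the nearest integer, and bounded by `K`, and if the partial Birkhoff
sums of `φ` satisfy `|Σ_{r=1}^k φ(rα)| ≤ B·k` for all `1 ≤ k ≤ N`, then
`|Σ_{r=1}^N ψ(rMα)·φ(rα)| ≤ B·N·((1/2)·C·‖Mα‖·(N−1) + K)`. -/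
theorem stmt14 (α M : ℝ) (N : ℕ) (hN : 1 ≤ N)
    (ψ : ℝ → ℂ) (C K B : ℝ)
    (hper : ∀ x : ℝ, ψ (x + 1) = ψ x)
    (hlip : ∀ x y : ℝ, ‖ψ x - ψ y‖ ≤ C * |x - y - (round (x - y) : ℤ)|)
    (hK : ∀ x : ℝ, ‖ψ x‖ ≤ K)
    (φ : ℝ → ℂ)
    (hφ : ∀ k : ℕ, 1 ≤ k → k ≤ N →
      ‖∑ r ∈ Finset.Icc 1 k, φ ((r : ℝ) * α)‖ ≤ B * k) :
    ‖∑ r ∈ Finset.Icc 1 N, ψ ((r : ℝ) * M * α) * φ ((r : ℝ) * α)‖ ≤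
      B * N * ((1 / 2) * C * |M * α - (round (M * α) : ℤ)| * ((N : ℝ) - 1) + K) :=
  stmt14_general α M N ψ C K B hlip hK φ hφ
end

section
/- Let α ∈ (0,1) be irrational, let N ≥ 1 be an integer, let n = max{r : q_r ≤ N}, and let A_{n+1} = max_{0 ≤ r ≤ n} (q_{r+1}/q_r). Then Σ_{r=1}^{N} 1/{r·α} < N·log(q_n) + (N + q_n)·A_{n+1} + (2·N + 3·q_n). -/
open Finset

namespace S16

/-- fractional parts of complete quotients -/
noncomputable def fq (α : ℝ) (j : ℕ) : ℝ := Int.fract (cq α j)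

/-- products of fractional parts: `pr α r = ∏_{j ≤ r} fq α j = |q_r α - p_r|` -/
noncomputable def pr (α : ℝ) (r : ℕ) : ℝ := ∏ j ∈ Finset.range (r + 1), fq α j

noncomputable def qprev (α : ℝ) : ℕ → ℕ
  | 0 => 0
  | r + 1 => qp α r

noncomputable def pprev (α : ℝ) : ℕ → ℕ
  | 0 => 1
  | r + 1 => pn α r

variable {α : ℝ}

lemma cq_succ (j : ℕ) : cq α (j + 1) = 1 / fq α j := rfl

lemma irr_cq (hirr : Irrational α) : ∀ j, Irrational (cq α j)
  | 0 => hirr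
  | (j+1) => by
      have ih := irr_cq hirr j
      have h1 : Irrational (cq α j - (⌊cq α j⌋ : ℝ)) := by
        simpa using (ih : Irrational (cq α j)).sub_intCast ⌊cq α j⌋
      rw [show cq α (j+1) = 1/(cq α j - (⌊cq α j⌋:ℝ)) from rfl, one_div]
      exact h1.inv

lemma fq_pos (hirr : Irrational α) (j : ℕ) : 0 < fq α j := by
  have h := irr_cq hirr j
  have h0 : Int.fract (cq α j) ≠ 0 := by
    intro h0
    have : cq α j = (⌊cq α j⌋ : ℝ) := by
      have := Int.fract_add_floor (cq α j); rw [h0] at this; simpa using this.symm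
    exact h.ne_int _ this
  exact lt_of_le_of_ne (Int.fract_nonneg _) (Ne.symm h0)

lemma fq_lt_one (j : ℕ) : fq α j < 1 := Int.fract_lt_one _

lemma one_lt_cq (hirr : Irrational α) (j : ℕ) : 1 < cq α (j + 1) := by
  rw [cq_succ]
  exact (one_lt_one_div (fq_pos hirr j) (fq_lt_one j))

lemma floor_cq_zero (h0 : 0 < α) (h1 : α < 1) : ⌊cq α 0⌋ = 0 := by
  show ⌊α⌋ = 0
  exact Int.floor_eq_zero_iff.mpr ⟨le_of_lt h0, h1⟩

lemma aq_cast (hirr : Irrational α) (h0 : 0 < α) (h1 : α < 1) (j : ℕ) :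
    ((aq α j : ℕ) : ℝ) = (⌊cq α j⌋ : ℝ) := by
  cases j with
  | zero => simp [aq, floor_cq_zero h0 h1]
  | succ k =>
      have : (1:ℤ) ≤ ⌊cq α (k+1)⌋ := by
        have := one_lt_cq hirr (α := α) k
        exact Int.le_floor.mpr (by exact_mod_cast this.le)
      rw [aq]
      exact_mod_cast Int.toNat_of_nonneg (by linarith)

lemma cq_eq_add (hirr : Irrational α) (h0 : 0 < α) (h1 : α < 1) (j : ℕ) :
    cq α j = (aq α j : ℝ) + fq α j := by
  rw [aq_cast hirr h0 h1, fq, Int.fract]; ring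

lemma one_le_aq (hirr : Irrational α) (h0 : 0 < α) (h1 : α < 1) (j : ℕ) : 1 ≤ aq α (j + 1) := by
  by_contra h
  push_neg at h
  interval_cases h' : aq α (j+1)
  · have hc := cq_eq_add hirr h0 h1 (j+1)
    rw [h'] at hc
    have := one_lt_cq hirr (α := α) j
    have := fq_lt_one (α := α) (j+1)
    push_cast at hc
    linarith

lemma pr_pos (hirr : Irrational α) (r : ℕ) : 0 < pr α r :=
  Finset.prod_pos fun j _ => fq_pos hirr j

lemma pr_zero (h0 : 0 < α) (h1 : α < 1) : pr α 0 = α := by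
  simp [pr, fq]
  rw [show cq α 0 = α from rfl]
  exact Int.fract_eq_self.mpr ⟨h0.le, h1⟩

lemma pr_succ (r : ℕ) : pr α (r + 1) = pr α r * fq α (r + 1) := by
  rw [pr, pr, Finset.prod_range_succ]

lemma pr_lt_one (hirr : Irrational α) (h0 : 0 < α) (h1 : α < 1) (r : ℕ) : pr α r < 1 := by
  induction r with
  | zero => rw [pr_zero h0 h1]; exact h1
  | succ k ih =>
      rw [pr_succ]
      have := fq_pos hirr (α := α) (k+1)
      have := fq_lt_one (α := α) (k+1)
      have := pr_pos hirr (α := α) k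
      nlinarith

lemma qp_recur (r : ℕ) : qp α (r + 1) = aq α (r + 1) * qp α r + qprev α r := by
  cases r with
  | zero => simp [qp, qprev]
  | succ k => rfl

lemma pn_recur (r : ℕ) : pn α (r + 1) = aq α (r + 1) * pn α r + pprev α r := by
  cases r with
  | zero => simp [pn, pprev]
  | succ k => rfl

lemma qp_pos (hirr : Irrational α) (h0 : 0 < α) (h1 : α < 1) (r : ℕ) : 1 ≤ qp α r := by
  induction r using Nat.strong_induction_on with
  | _ r ih =>
    match r with
    | 0 => exact le_refl 1
    | 1 => exact one_le_aq hirr h0 h1 0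
    | (k+2) =>
        have h1' : 1 ≤ qp α (k+1) := ih (k+1) (by omega)
        have h2 : 1 ≤ aq α (k+2) := one_le_aq hirr h0 h1 (k+1)
        show 1 ≤ aq α (k+2) * qp α (k+1) + qp α k
        nlinarith

lemma qp_le_succ (hirr : Irrational α) (h0 : 0 < α) (h1 : α < 1) (r : ℕ) :
    qp α r ≤ qp α (r + 1) := by
  rw [qp_recur]
  have h2 := one_le_aq hirr h0 h1 r
  nlinarith [qp_pos hirr h0 h1 r]

lemma qp_mono (hirr : Irrational α) (h0 : 0 < α) (h1 : α < 1) : Monotone (qp α) :=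
  monotone_nat_of_le_succ (qp_le_succ hirr h0 h1)

lemma qp_ge (hirr : Irrational α) (h0 : 0 < α) (h1 : α < 1) (r : ℕ) : r ≤ qp α r := by
  induction r using Nat.strong_induction_on with
  | _ r ih =>
    match r with
    | 0 => omega
    | 1 => exact one_le_aq hirr h0 h1 0
    | (k+2) =>
        have h1' : k + 1 ≤ qp α (k+1) := ih (k+1) (by omega)
        have h2 : 1 ≤ qp α k := qp_pos hirr h0 h1 k
        have h3 : 1 ≤ aq α (k+2) := one_le_aq hirr h0 h1 (k+1)
        show k + 2 ≤ aq α (k+2) * qp α (k+1) + qp α k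
        nlinarith

end S16

section chunk2
namespace S16
variable {α : ℝ}

lemma key1 (hirr : Irrational α) (h0 : 0 < α) (h1 : α < 1) (r : ℕ) :
    (cq α (r + 1) * (qp α r : ℝ) + (qprev α r : ℝ)) * pr α r = 1 := by
  induction r with
  | zero =>
      have hα : cq α 1 = 1 / α := by
        rw [cq_succ]
        congr 1
        rw [fq]
        exact Int.fract_eq_self.mpr ⟨h0.le, h1⟩
      simp [hα, qprev, qp, pr_zero h0 h1]
      field_simp
  | succ k ih =>
      have hF : fq α (k+1) ≠ 0 := ne_of_gt (fq_pos hirr (k+1))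
      have hq : qp α (k+2) = aq α (k+2) * qp α (k+1) + qp α k := rfl
      have hcq2 : cq α (k+2) = 1 / fq α (k+1) := cq_succ (k+1)
      have hcq1 : cq α (k+1) = (aq α (k+1) : ℝ) + fq α (k+1) := cq_eq_add hirr h0 h1 (k+1)
      have hQ : (qp α (k+1) : ℝ) = (aq α (k+1) : ℝ) * (qp α k : ℝ) + (qprev α k : ℝ) := by
        exact_mod_cast qp_recur (α := α) k
      show (cq α (k+2) * (qp α (k+1) : ℝ) + (qp α k : ℝ)) * pr α (k+1) = 1
      rw [pr_succ, hcq2]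
      have expand : (1 / fq α (k+1) * (qp α (k+1):ℝ) + (qp α k:ℝ)) * (pr α k * fq α (k+1))
          = ((qp α (k+1):ℝ) + (qp α k:ℝ) * fq α (k+1)) * pr α k := by
        field_simp
      rw [expand, hQ]
      calc (((aq α (k+1):ℝ) * (qp α k:ℝ) + (qprev α k:ℝ)) + (qp α k:ℝ) * fq α (k+1)) * pr α k
          = (((aq α (k+1):ℝ) + fq α (k+1)) * (qp α k : ℝ) + (qprev α k:ℝ)) * pr α k := by ring
        _ = 1 := by rw [← hcq1]; exact ih

lemma qp1_pr_lt_one (hirr : Irrational α) (h0 : 0 < α) (h1 : α < 1) (r : ℕ) :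
    (qp α (r + 1) : ℝ) * pr α r < 1 := by
  have h := key1 hirr h0 h1 r
  have hQ : (qp α (r+1) : ℝ) = (aq α (r+1) : ℝ) * (qp α r : ℝ) + (qprev α r : ℝ) := by
    exact_mod_cast qp_recur (α := α) r
  have hcq : cq α (r+1) = (aq α (r+1) : ℝ) + fq α (r+1) := cq_eq_add hirr h0 h1 (r+1)
  have hf := fq_pos hirr (α := α) (r+1)
  have hp := pr_pos hirr (α := α) r
  have hqp : (1:ℝ) ≤ (qp α r : ℝ) := by exact_mod_cast qp_pos hirr h0 h1 r
  have e : (qp α (r+1):ℝ) * pr α r = 1 - fq α (r+1) * (qp α r : ℝ) * pr α r := by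
    rw [hQ]; linear_combination h - (qp α r : ℝ) * (pr α r) * hcq
  rw [e]
  have hpos : 0 < fq α (r+1) * (qp α r : ℝ) * pr α r :=
    mul_pos (mul_pos hf (by linarith)) hp
  linarith

lemma one_lt_qp2_pr (hirr : Irrational α) (h0 : 0 < α) (h1 : α < 1) (r : ℕ) :
    1 < ((qp α (r + 1) : ℝ) + (qp α r : ℝ)) * pr α r := by
  have h := key1 hirr h0 h1 r
  have hQ : (qp α (r+1) : ℝ) = (aq α (r+1) : ℝ) * (qp α r : ℝ) + (qprev α r : ℝ) := by
    exact_mod_cast qp_recur (α := α) r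
  have hcq : cq α (r+1) = (aq α (r+1) : ℝ) + fq α (r+1) := cq_eq_add hirr h0 h1 (r+1)
  have hf := fq_lt_one (α := α) (r+1)
  have hp := pr_pos hirr (α := α) r
  have hqp : (1:ℝ) ≤ (qp α r : ℝ) := by exact_mod_cast qp_pos hirr h0 h1 r
  have hf2 := fq_pos hirr (α := α) (r+1)
  have e : ((qp α (r+1):ℝ) + (qp α r : ℝ)) * pr α r
      = 1 + (1 - fq α (r+1)) * (qp α r : ℝ) * pr α r := by
    rw [hQ]; linear_combination h - (qp α r : ℝ) * (pr α r) * hcq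
  rw [e]
  have hpos : 0 < (1 - fq α (r+1)) * (qp α r : ℝ) * pr α r :=
    mul_pos (mul_pos (by linarith) (by linarith)) hp
  linarith

lemma delta (hirr : Irrational α) (h0 : 0 < α) (h1 : α < 1) (r : ℕ) :
    (qp α r : ℝ) * α - (pn α r : ℝ) = (-1)^r * pr α r := by
  have key : ∀ m : ℕ, ((qp α m : ℝ) * α - (pn α m : ℝ) = (-1)^m * pr α m) ∧
      ((qp α (m+1) : ℝ) * α - (pn α (m+1) : ℝ) = (-1)^(m+1) * pr α (m+1)) := by
    intro m
    induction m with
    | zero =>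
        constructor
        · simp [qp, pn, pr_zero h0 h1]
        · have hq1 : qp α 1 = aq α 1 := rfl
          have hp1 : pn α 1 = 1 := rfl
          have hpr : pr α 1 = pr α 0 * fq α 1 := pr_succ 0
          have hfq1 : fq α 1 = cq α 1 - (aq α 1 : ℝ) := by
            have := cq_eq_add hirr h0 h1 1; linarith
          have hcq1 : cq α 1 = 1 / α := by
            rw [cq_succ]
            congr 1
            rw [fq]
            exact Int.fract_eq_self.mpr ⟨h0.le, h1⟩
          rw [hq1, hp1, hpr, pr_zero h0 h1, hfq1, hcq1]
          have hα : α ≠ 0 := ne_of_gt h0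
          field_simp
          ring
    | succ k ih =>
        obtain ⟨ih1, ih2⟩ := ih
        refine ⟨ih2, ?_⟩
        have hq : (qp α (k+2) : ℝ) = (aq α (k+2) : ℝ) * (qp α (k+1) : ℝ) + (qp α k : ℝ) := by
          exact_mod_cast (show qp α (k+2) = aq α (k+2) * qp α (k+1) + qp α k from rfl)
        have hp : (pn α (k+2) : ℝ) = (aq α (k+2) : ℝ) * (pn α (k+1) : ℝ) + (pn α k : ℝ) := by
          exact_mod_cast (show pn α (k+2) = aq α (k+2) * pn α (k+1) + pn α k from rfl)
        have hcq : cq α (k+2) = (aq α (k+2) : ℝ) + fq α (k+2) := cq_eq_add hirr h0 h1 (k+2)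
        have hcqf : cq α (k+2) * fq α (k+1) = 1 := by
          rw [cq_succ]
          field_simp [ne_of_gt (fq_pos hirr (α := α) (k+1))]
        have hff : fq α (k+1) * (fq α (k+2) + (aq α (k+2):ℝ)) = 1 := by
          rw [← hcqf]; rw [hcq]; ring
        have e1 : (qp α (k+2) : ℝ) * α - (pn α (k+2) : ℝ)
            = (aq α (k+2) : ℝ) * ((qp α (k+1) : ℝ) * α - (pn α (k+1):ℝ)) + ((qp α k : ℝ) * α - (pn α k : ℝ)) := by
          rw [hq, hp]; ring
        rw [e1, ih1, ih2]
        rw [pr_succ (k+1), pr_succ k]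
        have : (-1:ℝ)^(k+2) = (-1)^k := by ring
        rw [this, show (-1:ℝ)^(k+1) = -(-1)^k by ring]
        linear_combination (-((-1:ℝ)^k) * pr α k) * hff
  exact (key r).1

lemma det (r : ℕ) : (pn α (r+1) : ℤ) * (qp α r : ℤ) - (pn α r : ℤ) * (qp α (r+1) : ℤ) = (-1)^r := by
  induction r with
  | zero => simp [qp, pn]
  | succ k ih =>
      have hq : (qp α (k+2) : ℤ) = (aq α (k+2) : ℤ) * (qp α (k+1) : ℤ) + (qp α k : ℤ) := by
        exact_mod_cast (show qp α (k+2) = aq α (k+2) * qp α (k+1) + qp α k from rfl)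
      have hp : (pn α (k+2) : ℤ) = (aq α (k+2) : ℤ) * (pn α (k+1) : ℤ) + (pn α k : ℤ) := by
        exact_mod_cast (show pn α (k+2) = aq α (k+2) * pn α (k+1) + pn α k from rfl)
      rw [hq, hp, show ((-1:ℤ))^(k+1) = -(-1)^k by ring, ← ih]
      ring

lemma coprime_pq (r : ℕ) : Nat.Coprime (pn α r) (qp α r) := by
  cases r with
  | zero => simp [pn, qp, Nat.Coprime]
  | succ k =>
      have h := det (α := α) k
      have hc : IsCoprime ((pn α (k+1) : ℤ)) ((qp α (k+1) : ℤ)) := by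
        refine ⟨(-1)^k * (qp α k : ℤ), -((-1)^k * (pn α k : ℤ)), ?_⟩
        have : ((-1:ℤ))^k * ((-1:ℤ))^k = 1 := by
          rw [← pow_add]; exact (neg_one_pow_eq_one_iff_even (by norm_num)).mpr ⟨k, rfl⟩
        linear_combination ((-1:ℤ)^k) * h + this
      rw [Nat.Coprime, ← Int.gcd_natCast_natCast]
      exact Int.isCoprime_iff_gcd_eq_one.mp hc

end S16
end chunk2

section chunk3
namespace S16
variable {α : ℝ}

lemma salpha (hirr : Irrational α) (h0 : 0 < α) (h1 : α < 1) (r s : ℕ) :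
    (s:ℝ) * α = ((s * pn α r / qp α r : ℕ) : ℝ)
      + (((s * pn α r % qp α r : ℕ) : ℝ) + (-1)^r * ((s:ℝ) * pr α r)) / (qp α r : ℝ) := by
  have hq0 : (0:ℝ) < (qp α r : ℝ) := by exact_mod_cast qp_pos hirr h0 h1 r
  have hd := delta hirr h0 h1 r
  have hdmR : (qp α r : ℝ) * ((s * pn α r / qp α r : ℕ):ℝ) + ((s * pn α r % qp α r : ℕ):ℝ)
      = (s:ℝ) * (pn α r : ℝ) := by exact_mod_cast Nat.div_add_mod (s * pn α r) (qp α r)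
  field_simp
  linear_combination (s:ℝ) * hd - hdmR

lemma spr_pos (hirr : Irrational α) (r s : ℕ) (hs1 : 1 ≤ s) : 0 < (s:ℝ) * pr α r := by
  have := pr_pos hirr (α := α) r
  have : (0:ℝ) < (s:ℝ) := by exact_mod_cast hs1
  positivity

lemma spr_lt_one (hirr : Irrational α) (h0 : 0 < α) (h1 : α < 1) (r s : ℕ)
    (hs2 : s < qp α (r+1)) : (s:ℝ) * pr α r < 1 := by
  have h2 := qp1_pr_lt_one hirr h0 h1 r
  have hp := pr_pos hirr (α := α) r
  have hcast : (s:ℝ) ≤ ((qp α (r+1) : ℕ):ℝ) := by exact_mod_cast hs2.le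
  nlinarith

lemma fract_shift (D : ℕ) (x : ℝ) : Int.fract ((D:ℝ) + x) = Int.fract x := by
  rw [show ((D:ℕ):ℝ) = ((D:ℤ):ℝ) by push_cast; ring, Int.fract_intCast_add]

lemma fract_even (hirr : Irrational α) (h0 : 0 < α) (h1 : α < 1) (r s : ℕ)
    (hr : Even r) (hs1 : 1 ≤ s) (hs2 : s < qp α (r+1)) :
    Int.fract ((s:ℝ) * α)
      = (((s * pn α r % qp α r : ℕ) : ℝ) + (s:ℝ) * pr α r) / (qp α r : ℝ) := by
  rw [salpha hirr h0 h1 r s, hr.neg_one_pow, one_mul, fract_shift]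
  apply Int.fract_eq_self.mpr
  have hq0 : (0:ℝ) < (qp α r : ℝ) := by exact_mod_cast qp_pos hirr h0 h1 r
  have hcq : s * pn α r % qp α r < qp α r := Nat.mod_lt _ (qp_pos hirr h0 h1 r)
  have hcR : ((s * pn α r % qp α r : ℕ):ℝ) + 1 ≤ (qp α r : ℝ) := by exact_mod_cast hcq
  have hc0 : (0:ℝ) ≤ ((s * pn α r % qp α r : ℕ):ℝ) := by positivity
  have h3 := spr_pos hirr r s hs1
  have h4 := spr_lt_one hirr h0 h1 r s hs2
  constructor
  · positivity
  · rw [div_lt_one hq0]; linarith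

lemma fract_odd_pos (hirr : Irrational α) (h0 : 0 < α) (h1 : α < 1) (r s : ℕ)
    (hr : Odd r) (hs1 : 1 ≤ s) (hs2 : s < qp α (r+1)) (hc : 1 ≤ s * pn α r % qp α r) :
    Int.fract ((s:ℝ) * α)
      = (((s * pn α r % qp α r : ℕ) : ℝ) - (s:ℝ) * pr α r) / (qp α r : ℝ) := by
  rw [salpha hirr h0 h1 r s, hr.neg_one_pow, fract_shift]
  rw [show (((s * pn α r % qp α r : ℕ) : ℝ) + (-1) * ((s:ℝ) * pr α r))
      = (((s * pn α r % qp α r : ℕ) : ℝ) - (s:ℝ) * pr α r) by ring]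
  apply Int.fract_eq_self.mpr
  have hq0 : (0:ℝ) < (qp α r : ℝ) := by exact_mod_cast qp_pos hirr h0 h1 r
  have hcq : s * pn α r % qp α r < qp α r := Nat.mod_lt _ (qp_pos hirr h0 h1 r)
  have hcR : ((s * pn α r % qp α r : ℕ):ℝ) + 1 ≤ (qp α r : ℝ) := by exact_mod_cast hcq
  have hc1 : (1:ℝ) ≤ ((s * pn α r % qp α r : ℕ):ℝ) := by exact_mod_cast hc
  have h3 := spr_pos hirr r s hs1
  have h4 := spr_lt_one hirr h0 h1 r s hs2
  constructor
  · apply div_nonneg _ hq0.le; linarith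
  · rw [div_lt_one hq0]; linarith

lemma fract_odd_zero (hirr : Irrational α) (h0 : 0 < α) (h1 : α < 1) (r s : ℕ)
    (hr : Odd r) (hs1 : 1 ≤ s) (hs2 : s < qp α (r+1)) (hc : s * pn α r % qp α r = 0) :
    Int.fract ((s:ℝ) * α) = 1 - (s:ℝ) * pr α r / (qp α r : ℝ) := by
  rw [salpha hirr h0 h1 r s, hr.neg_one_pow, fract_shift, hc]
  have hq0 : (0:ℝ) < (qp α r : ℝ) := by exact_mod_cast qp_pos hirr h0 h1 r
  have hq1 : (1:ℝ) ≤ (qp α r : ℝ) := by exact_mod_cast qp_pos hirr h0 h1 r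
  have h3 := spr_pos hirr r s hs1
  have h4 := spr_lt_one hirr h0 h1 r s hs2
  have hx1 : ((0:ℕ):ℝ) + (-1)^1 * ((s:ℝ) * pr α r) = -((s:ℝ) * pr α r) := by push_cast; ring
  have hxval : (((0:ℕ):ℝ) + (-1) * ((s:ℝ) * pr α r)) / (qp α r : ℝ)
      = -((s:ℝ) * pr α r / (qp α r : ℝ)) := by push_cast; ring
  rw [hxval]
  have hbl : (s:ℝ) * pr α r / (qp α r : ℝ) < 1 := by
    rw [div_lt_one hq0]; linarith
  have hbg : 0 < (s:ℝ) * pr α r / (qp α r : ℝ) := by positivity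
  rw [Int.fract]
  have hfl : ⌊-((s:ℝ) * pr α r / (qp α r : ℝ))⌋ = -1 := by
    apply Int.floor_eq_iff.mpr
    constructor
    · push_cast; linarith
    · push_cast; linarith
  rw [hfl]; push_cast; ring

lemma harm (m : ℕ) : ∑ c ∈ Finset.Icc 1 m, (1:ℝ)/c ≤ 1 + Real.log m := by
  induction m with
  | zero => simp
  | succ m ih =>
      rcases Nat.eq_zero_or_pos m with hm | hm
      · subst hm; norm_num
      · rw [Finset.sum_Icc_succ_top (by omega : 1 ≤ m + 1)]
        have hm1 : (1:ℝ) ≤ (m:ℝ) := by exact_mod_cast hm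
        have hlog : Real.log ((m:ℝ) / ((m:ℝ)+1)) ≤ (m:ℝ)/((m:ℝ)+1) - 1 :=
          Real.log_le_sub_one_of_pos (by positivity)
        have hld : Real.log ((m:ℝ) / ((m:ℝ)+1)) = Real.log m - Real.log ((m:ℝ)+1) :=
          Real.log_div (by linarith) (by linarith)
        have hfrac : (m:ℝ)/((m:ℝ)+1) - 1 = -(1/((m:ℝ)+1)) := by field_simp; ring
        have hcast : ((m+1:ℕ):ℝ) = (m:ℝ)+1 := by push_cast; ring
        rw [hcast]
        have : (1:ℝ)/((m:ℝ)+1) ≤ Real.log ((m:ℝ)+1) - Real.log m := by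
          rw [hld] at hlog; rw [hfrac] at hlog; linarith
        linarith

lemma injOn_res (hirr : Irrational α) (h0 : 0 < α) (h1 : α < 1) (r y : ℕ) :
    Set.InjOn (fun s => s * pn α r % qp α r) (Finset.Ioc y (y + qp α r)) := by
  intro s hs t ht hst
  simp only [Finset.coe_Ioc, Set.mem_Ioc] at hs ht
  have hq : 0 < qp α r := qp_pos hirr h0 h1 r
  have hmod : s * pn α r ≡ t * pn α r [MOD qp α r] := hst
  have hcop : Nat.Coprime (pn α r) (qp α r) := coprime_pq r
  have h2 : s ≡ t [MOD qp α r] :=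
    Nat.ModEq.cancel_right_of_coprime (by simpa [Nat.Coprime, Nat.gcd_comm] using hcop) hmod
  have hd : (qp α r : ℤ) ∣ (t - s : ℤ) := h2.dvd
  rcases hd with ⟨k, hk⟩
  have hb1 : (t:ℤ) - s < qp α r := by omega
  have hb2 : -((qp α r : ℤ)) < (t:ℤ) - s := by omega
  have hk0 : k = 0 := by
    rcases lt_trichotomy k 0 with h | h | h
    · exfalso; nlinarith [hk, hb2]
    · exact h
    · exfalso; nlinarith [hk, hb1]
  rw [hk0, mul_zero] at hk
  omega

lemma image_res (hirr : Irrational α) (h0 : 0 < α) (h1 : α < 1) (r y : ℕ) :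
    (Finset.Ioc y (y + qp α r)).image (fun s => s * pn α r % qp α r)
      = Finset.range (qp α r) := by
  have hq : 0 < qp α r := qp_pos hirr h0 h1 r
  apply Finset.eq_of_subset_of_card_le
  · intro c hc
    simp only [Finset.mem_image] at hc
    obtain ⟨s, _, rfl⟩ := hc
    exact Finset.mem_range.mpr (Nat.mod_lt _ hq)
  · rw [Finset.card_image_of_injOn (injOn_res hirr h0 h1 r y)]
    simp [Nat.card_Ioc]

lemma sum_residues (hirr : Irrational α) (h0 : 0 < α) (h1 : α < 1) (r y : ℕ) (h : ℕ → ℝ) :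
    ∑ s ∈ Finset.Ioc y (y + qp α r), h (s * pn α r % qp α r)
      = ∑ c ∈ Finset.range (qp α r), h c := by
  rw [← image_res hirr h0 h1 r y,
    Finset.sum_image (fun x hx z hz hxz => injOn_res hirr h0 h1 r y hx hz hxz)]

end S16
end chunk3

section chunk4
namespace S16
variable {α : ℝ}

lemma log_cast_mono (a b : ℕ) (hab : a ≤ b) : Real.log (a:ℝ) ≤ Real.log (b:ℝ) := by
  rcases Nat.eq_zero_or_pos a with h | h
  · subst h
    simp only [Nat.cast_zero, Real.log_zero]
    exact Real.log_natCast_nonneg b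
  · exact Real.log_le_log (by exact_mod_cast h) (by exact_mod_cast hab)

lemma sum_even_res (hirr : Irrational α) (h0 : 0 < α) (h1 : α < 1) (r : ℕ) :
    ∑ c ∈ Finset.range (qp α r), (if c = 0 then 1/pr α r else (qp α r:ℝ)/c)
      ≤ 1/pr α r + (qp α r:ℝ) * (2 + Real.log (qp α r)) := by
  have hq : 1 ≤ qp α r := qp_pos hirr h0 h1 r
  have hqR : (1:ℝ) ≤ (qp α r : ℝ) := by exact_mod_cast hq
  have hlogq : 0 ≤ Real.log (qp α r : ℝ) := Real.log_nonneg hqR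
  rw [Finset.range_eq_Ico,
    ← Finset.sum_Ico_consecutive (fun c => if c = 0 then 1/pr α r else (qp α r:ℝ)/c)
      (Nat.zero_le 1) hq]
  have e1 : ∑ c ∈ Finset.Ico (0:ℕ) 1, (if c = 0 then 1/pr α r else (qp α r:ℝ)/(c:ℝ)) = 1/pr α r := by
    rw [← Finset.range_eq_Ico, Finset.sum_range_one]
    norm_num
  have e2 : ∑ c ∈ Finset.Ico (1:ℕ) (qp α r), (if c = 0 then 1/pr α r else (qp α r:ℝ)/(c:ℝ))
      = ∑ c ∈ Finset.Ico (1:ℕ) (qp α r), (qp α r:ℝ) * ((1:ℝ)/(c:ℝ)) := by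
    apply Finset.sum_congr rfl
    intro c hc
    have : 1 ≤ c := (Finset.mem_Ico.mp hc).1
    rw [if_neg (by omega)]
    ring
  have e3 : Finset.Ico (1:ℕ) (qp α r) = Finset.Icc (1:ℕ) (qp α r - 1) := by
    rw [← Finset.Ico_add_one_right_eq_Icc]
    congr 1
    omega
  rw [e1, e2, e3, ← Finset.mul_sum]
  have h4 := harm (qp α r - 1)
  have h5 : Real.log ((qp α r - 1 : ℕ):ℝ) ≤ Real.log (qp α r : ℝ) :=
    log_cast_mono _ _ (by omega)
  have h6 : ∑ c ∈ Finset.Icc 1 (qp α r - 1), (1:ℝ)/c ≤ 1 + Real.log (qp α r : ℝ) := by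
    linarith
  have h7 : (qp α r:ℝ) * (∑ c ∈ Finset.Icc 1 (qp α r - 1), (1:ℝ)/c)
      ≤ (qp α r:ℝ) * (1 + Real.log (qp α r : ℝ)) :=
    mul_le_mul_of_nonneg_left h6 (by linarith)
  linarith

lemma sum_odd_res (hirr : Irrational α) (h0 : 0 < α) (h1 : α < 1) (r : ℕ) :
    ∑ c ∈ Finset.range (qp α r),
        (if c = 0 then (if qp α r = 1 then 1/pr α r else 2)
          else if c = 1 then 1/pr α r else (qp α r:ℝ)/((c:ℝ)-1))
      ≤ 1/pr α r + (qp α r:ℝ) * (2 + Real.log (qp α r)) := by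
  have hq : 1 ≤ qp α r := qp_pos hirr h0 h1 r
  have hqR : (1:ℝ) ≤ (qp α r : ℝ) := by exact_mod_cast hq
  have hlogq : 0 ≤ Real.log (qp α r : ℝ) := Real.log_nonneg hqR
  by_cases hq1 : qp α r = 1
  · rw [hq1, Finset.sum_range_one]
    norm_num [Real.log_one]
  · have hq2 : 2 ≤ qp α r := by omega
    have hq2R : (2:ℝ) ≤ (qp α r : ℝ) := by exact_mod_cast hq2
    rw [Finset.range_eq_Ico,
      ← Finset.sum_Ico_consecutive (fun c => if c = 0 then (if qp α r = 1 then 1/pr α r else 2)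
          else if c = 1 then 1/pr α r else (qp α r:ℝ)/((c:ℝ)-1)) (Nat.zero_le 2) hq2]
    have e1 : ∑ c ∈ Finset.Ico (0:ℕ) 2,
        (if c = 0 then (if qp α r = 1 then 1/pr α r else 2)
          else if c = 1 then 1/pr α r else (qp α r:ℝ)/((c:ℝ)-1)) = 2 + 1/pr α r := by
      rw [← Finset.range_eq_Ico, Finset.sum_range_succ, Finset.sum_range_one]
      rw [if_pos rfl, if_neg hq1]
      norm_num
    have e2 : ∑ c ∈ Finset.Ico (2:ℕ) (qp α r),
        (if c = 0 then (if qp α r = 1 then 1/pr α r else 2)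
          else if c = 1 then 1/pr α r else (qp α r:ℝ)/((c:ℝ)-1))
        = ∑ i ∈ Finset.range (qp α r - 2), (qp α r:ℝ) * ((1:ℝ)/((1+i:ℕ):ℝ)) := by
      rw [Finset.sum_Ico_eq_sum_range]
      apply Finset.sum_congr rfl
      intro i _
      rw [if_neg (by omega), if_neg (by omega)]
      push_cast
      rw [show ((2:ℝ)+(i:ℝ))-1 = 1+(i:ℝ) by ring, div_eq_mul_one_div]
    have e3 : ∑ c ∈ Finset.Icc 1 (qp α r - 2), (1:ℝ)/c
        = ∑ i ∈ Finset.range (qp α r - 2), (1:ℝ)/((1+i:ℕ):ℝ) := by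
      rw [← Finset.Ico_add_one_right_eq_Icc, Finset.sum_Ico_eq_sum_range]
      apply Finset.sum_congr rfl
      intro i _
      norm_num
    have h4 := harm (qp α r - 2)
    have h5 : Real.log ((qp α r - 2 : ℕ):ℝ) ≤ Real.log (qp α r : ℝ) :=
      log_cast_mono _ _ (by omega)
    have h6 : ∑ i ∈ Finset.range (qp α r - 2), (1:ℝ)/((1+i:ℕ):ℝ)
        ≤ 1 + Real.log (qp α r : ℝ) := by rw [← e3]; linarith
    have h7 : ∑ i ∈ Finset.range (qp α r - 2), (qp α r:ℝ) * ((1:ℝ)/((1+i:ℕ):ℝ))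
        ≤ (qp α r:ℝ) * (1 + Real.log (qp α r : ℝ)) := by
      rw [← Finset.mul_sum]
      exact mul_le_mul_of_nonneg_left h6 (by linarith)
    rw [e1, e2]
    linarith

lemma odd_c1_bound (hirr : Irrational α) (h0 : 0 < α) (h1 : α < 1) (r s : ℕ)
    (hr : Odd r) (hs2 : s < qp α (r+1)) (hc : s * pn α r % qp α r = 1) :
    (qp α r : ℝ) ≤ (qp α (r+1):ℝ) - (s:ℝ) := by
  obtain ⟨k, hk⟩ : ∃ k, r = k + 1 := by
    cases r with
    | zero => exact absurd hr (by simp)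
    | succ k => exact ⟨k, rfl⟩
  subst hk
  have hkeven : Even k := by
    rcases Nat.even_or_odd k with h | h
    · exact h
    · exact absurd (h.add_one) (by simpa using hr)
  have hq2 : 2 ≤ qp α (k+1) := by
    have := qp_pos hirr h0 h1 (k+1)
    rcases Nat.lt_or_ge (qp α (k+1)) 2 with h | h
    · exfalso
      have hq1 : qp α (k+1) = 1 := by omega
      rw [hq1, Nat.mod_one] at hc
      exact absurd hc (by omega)
    · exact h
  have hdet := det (α := α) k
  rw [hkeven.neg_one_pow] at hdet
  have m1 : pn α (k+1) * qp α k ≡ 1 [MOD qp α (k+1)] := by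
    rw [Nat.modEq_iff_dvd]
    exact ⟨-(pn α k : ℤ), by push_cast; linarith⟩
  have m2 : s * pn α (k+1) ≡ 1 [MOD qp α (k+1)] := by
    show s * pn α (k+1) % qp α (k+1) = 1 % qp α (k+1)
    rw [hc, Nat.mod_eq_of_lt hq2]
  have m1' : qp α k * pn α (k+1) ≡ 1 [MOD qp α (k+1)] := by
    rwa [mul_comm] at m1
  have m3 : s * pn α (k+1) ≡ qp α k * pn α (k+1) [MOD qp α (k+1)] := m2.trans m1'.symm
  have hcop : Nat.Coprime (pn α (k+1)) (qp α (k+1)) := coprime_pq (k+1)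
  have m4 : s ≡ qp α k [MOD qp α (k+1)] :=
    Nat.ModEq.cancel_right_of_coprime (by simpa [Nat.Coprime, Nat.gcd_comm] using hcop) m3
  have m5 : qp α (k+2) ≡ qp α k [MOD qp α (k+1)] := by
    show (aq α (k+2) * qp α (k+1) + qp α k) % qp α (k+1) = qp α k % qp α (k+1)
    rw [add_comm, Nat.add_mul_mod_self_right]
  have m6 : s ≡ qp α (k+2) [MOD qp α (k+1)] := m4.trans m5.symm
  have hdvd : (qp α (k+1) : ℤ) ∣ (qp α (k+2) : ℤ) - (s : ℤ) := m6.dvd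
  have hpos : (0:ℤ) < (qp α (k+2) : ℤ) - (s : ℤ) := by
    have : (s:ℤ) < (qp α (k+2) : ℤ) := by exact_mod_cast hs2
    omega
  have h9 : (qp α (k+1) : ℤ) ≤ (qp α (k+2) : ℤ) - (s : ℤ) := Int.le_of_dvd hpos hdvd
  exact_mod_cast h9

lemma block (hirr : Irrational α) (h0 : 0 < α) (h1 : α < 1) (r y : ℕ)
    (hend : y + qp α r < qp α (r+1)) :
    ∑ s ∈ Finset.Ioc y (y + qp α r), 1 / Int.fract ((s:ℝ) * α)
      ≤ 1/pr α r + (qp α r : ℝ) * (2 + Real.log (qp α r)) := by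
  have hq : 1 ≤ qp α r := qp_pos hirr h0 h1 r
  have hqR : (1:ℝ) ≤ (qp α r : ℝ) := by exact_mod_cast hq
  have hprp := pr_pos hirr (α := α) r
  rcases Nat.even_or_odd r with hr | hr
  · -- EVEN case
    have step1 : ∀ s ∈ Finset.Ioc y (y + qp α r), 1 / Int.fract ((s:ℝ) * α)
        ≤ (if s * pn α r % qp α r = 0 then 1/pr α r else (qp α r:ℝ)/((s * pn α r % qp α r : ℕ):ℝ)) := by
      intro s hs
      obtain ⟨hs1', hs2'⟩ := Finset.mem_Ioc.mp hs
      have hs1 : 1 ≤ s := by omega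
      have hs2 : s < qp α (r+1) := by omega
      have hf := fract_even hirr h0 h1 r s hr hs1 hs2
      have hsprp := spr_pos hirr (α := α) r s hs1
      by_cases hc : s * pn α r % qp α r = 0
      · rw [if_pos hc, hf, hc]
        have hdvd : qp α r ∣ s := by
          have h2 : qp α r ∣ s * pn α r := Nat.dvd_of_mod_eq_zero hc
          exact (Nat.Coprime.dvd_of_dvd_mul_right
            (by simpa [Nat.Coprime, Nat.gcd_comm] using coprime_pq (α := α) r) h2)
        have hqs : qp α r ≤ s := Nat.le_of_dvd (by omega) hdvd
        have hqsR : (qp α r : ℝ) ≤ (s:ℝ) := by exact_mod_cast hqs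
        have hlow : pr α r ≤ (((0:ℕ):ℝ) + (s:ℝ) * pr α r) / (qp α r : ℝ) := by
          rw [Nat.cast_zero, zero_add, le_div_iff₀ (by linarith)]
          nlinarith
        exact one_div_le_one_div_of_le hprp hlow
      · rw [if_neg hc, hf]
        have hc1 : 1 ≤ s * pn α r % qp α r := by omega
        have hcR : (1:ℝ) ≤ ((s * pn α r % qp α r : ℕ):ℝ) := by exact_mod_cast hc1
        have hlow : ((s * pn α r % qp α r : ℕ):ℝ) / (qp α r : ℝ)
            ≤ (((s * pn α r % qp α r : ℕ):ℝ) + (s:ℝ) * pr α r) / (qp α r : ℝ) := by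
          gcongr <;> linarith
        calc 1 / ((((s * pn α r % qp α r : ℕ):ℝ) + (s:ℝ) * pr α r) / (qp α r : ℝ))
            ≤ 1 / (((s * pn α r % qp α r : ℕ):ℝ) / (qp α r : ℝ)) :=
              one_div_le_one_div_of_le
                (by positivity : (0:ℝ) < ((s * pn α r % qp α r : ℕ):ℝ) / (qp α r : ℝ)) hlow
          _ = (qp α r:ℝ)/((s * pn α r % qp α r : ℕ):ℝ) := one_div_div _ _
    calc ∑ s ∈ Finset.Ioc y (y + qp α r), 1 / Int.fract ((s:ℝ) * α)
        ≤ ∑ s ∈ Finset.Ioc y (y + qp α r),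
            (if s * pn α r % qp α r = 0 then 1/pr α r else (qp α r:ℝ)/((s * pn α r % qp α r : ℕ):ℝ)) :=
          Finset.sum_le_sum step1
      _ = ∑ c ∈ Finset.range (qp α r), (if c = 0 then 1/pr α r else (qp α r:ℝ)/(c:ℝ)) :=
          sum_residues hirr h0 h1 r y (fun c => if c = 0 then 1/pr α r else (qp α r:ℝ)/(c:ℝ))
      _ ≤ 1/pr α r + (qp α r : ℝ) * (2 + Real.log (qp α r)) := sum_even_res hirr h0 h1 r
  · -- ODD case
    have step1 : ∀ s ∈ Finset.Ioc y (y + qp α r), 1 / Int.fract ((s:ℝ) * α)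
        ≤ (if s * pn α r % qp α r = 0 then (if qp α r = 1 then 1/pr α r else 2)
            else if s * pn α r % qp α r = 1 then 1/pr α r
            else (qp α r:ℝ)/(((s * pn α r % qp α r : ℕ):ℝ)-1)) := by
      intro s hs
      obtain ⟨hs1', hs2'⟩ := Finset.mem_Ioc.mp hs
      have hs1 : 1 ≤ s := by omega
      have hs2 : s < qp α (r+1) := by omega
      have hsprp := spr_pos hirr (α := α) r s hs1
      have hspr1 := spr_lt_one hirr h0 h1 r s hs2
      by_cases hc : s * pn α r % qp α r = 0
      · rw [if_pos hc]
        have hf := fract_odd_zero hirr h0 h1 r s hr hs1 hs2 hc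
        by_cases hq1 : qp α r = 1
        · rw [if_pos hq1, hf]
          have hkey : (qp α r : ℝ) ≤ (qp α (r+1):ℝ) - (s:ℝ) := by
            have hmod : s ≡ qp α (r+1) [MOD qp α r] := by
              show s % qp α r = qp α (r+1) % qp α r
              rw [hq1]
              omega
            have hdvd : (qp α r : ℤ) ∣ (qp α (r+1) : ℤ) - (s : ℤ) := hmod.dvd
            have hpos : (0:ℤ) < (qp α (r+1) : ℤ) - (s : ℤ) := by
              have : (s:ℤ) < (qp α (r+1) : ℤ) := by exact_mod_cast hs2
              omega
            exact_mod_cast Int.le_of_dvd hpos hdvd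
          have hq1pr := qp1_pr_lt_one hirr h0 h1 r
          have hlow : pr α r ≤ 1 - (s:ℝ) * pr α r / (qp α r : ℝ) := by
            have hqe : (qp α r : ℝ) = 1 := by rw [hq1]; norm_num
            rw [hqe, div_one]
            have h8 : ((s:ℝ) + (qp α r : ℝ)) * pr α r ≤ (qp α (r+1):ℝ) * pr α r := by
              apply mul_le_mul_of_nonneg_right ?_ hprp.le
              linarith
            rw [hqe] at h8
            nlinarith
          exact one_div_le_one_div_of_le hprp hlow
        · rw [if_neg hq1, hf]
          have hq2 : (2:ℝ) ≤ (qp α r : ℝ) := by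
            have : 2 ≤ qp α r := by omega
            exact_mod_cast this
          have hlow : (1:ℝ)/2 ≤ 1 - (s:ℝ) * pr α r / (qp α r : ℝ) := by
            have h8 : (s:ℝ) * pr α r / (qp α r : ℝ) ≤ 1 / 2 := by
              rw [div_le_div_iff₀ (by linarith) (by norm_num)]
              nlinarith
            linarith
          have h9 := one_div_le_one_div_of_le (by norm_num : (0:ℝ) < (1:ℝ)/2) hlow
          norm_num at h9
          rw [one_div]
          exact h9
      · by_cases hc1 : s * pn α r % qp α r = 1
        · rw [if_neg hc, if_pos hc1]
          have hf := fract_odd_pos hirr h0 h1 r s hr hs1 hs2 (by omega)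
          rw [hf, hc1]
          have hkey := odd_c1_bound hirr h0 h1 r s hr hs2 hc1
          have hq1pr := qp1_pr_lt_one hirr h0 h1 r
          have hlow : pr α r ≤ (((1:ℕ):ℝ) - (s:ℝ) * pr α r) / (qp α r : ℝ) := by
            rw [le_div_iff₀ (by linarith)]
            push_cast
            have h8 : ((s:ℝ) + (qp α r:ℝ)) * pr α r ≤ (qp α (r+1):ℝ) * pr α r := by
              apply mul_le_mul_of_nonneg_right ?_ hprp.le
              linarith
            nlinarith
          exact one_div_le_one_div_of_le hprp hlow
        · rw [if_neg hc, if_neg hc1]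
          have hc2 : 2 ≤ s * pn α r % qp α r := by omega
          have hf := fract_odd_pos hirr h0 h1 r s hr hs1 hs2 (by omega)
          rw [hf]
          have hcR : (2:ℝ) ≤ ((s * pn α r % qp α r : ℕ):ℝ) := by exact_mod_cast hc2
          have hlow : (((s * pn α r % qp α r : ℕ):ℝ) - 1) / (qp α r : ℝ)
              ≤ (((s * pn α r % qp α r : ℕ):ℝ) - (s:ℝ) * pr α r) / (qp α r : ℝ) := by
            gcongr <;> linarith
          have hpos0 : (0:ℝ) < (((s * pn α r % qp α r : ℕ):ℝ) - 1) / (qp α r : ℝ) :=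
            div_pos (by linarith) (by linarith)
          calc 1 / ((((s * pn α r % qp α r : ℕ):ℝ) - (s:ℝ) * pr α r) / (qp α r : ℝ))
              ≤ 1 / ((((s * pn α r % qp α r : ℕ):ℝ) - 1) / (qp α r : ℝ)) :=
                one_div_le_one_div_of_le hpos0 hlow
            _ = (qp α r:ℝ)/(((s * pn α r % qp α r : ℕ):ℝ) - 1) := one_div_div _ _
    calc ∑ s ∈ Finset.Ioc y (y + qp α r), 1 / Int.fract ((s:ℝ) * α)
        ≤ ∑ s ∈ Finset.Ioc y (y + qp α r),
            (if s * pn α r % qp α r = 0 then (if qp α r = 1 then 1/pr α r else 2)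
              else if s * pn α r % qp α r = 1 then 1/pr α r
              else (qp α r:ℝ)/(((s * pn α r % qp α r : ℕ):ℝ)-1)) :=
          Finset.sum_le_sum step1
      _ = ∑ c ∈ Finset.range (qp α r),
            (if c = 0 then (if qp α r = 1 then 1/pr α r else 2)
              else if c = 1 then 1/pr α r else (qp α r:ℝ)/((c:ℝ)-1)) :=
          sum_residues hirr h0 h1 r y
            (fun c => if c = 0 then (if qp α r = 1 then 1/pr α r else 2)
              else if c = 1 then 1/pr α r else (qp α r:ℝ)/((c:ℝ)-1))
      _ ≤ 1/pr α r + (qp α r : ℝ) * (2 + Real.log (qp α r)) := sum_odd_res hirr h0 h1 r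

end S16
end chunk4

section chunk5
namespace S16
variable {α : ℝ}

lemma inv_pr_lt (hirr : Irrational α) (h0 : 0 < α) (h1 : α < 1) (r : ℕ) :
    1 / pr α r < (qp α (r+1):ℝ) + (qp α r:ℝ) := by
  have h := one_lt_qp2_pr hirr h0 h1 r
  have hp := pr_pos hirr (α := α) r
  rw [div_lt_iff₀ hp]
  linarith

lemma inner_loop (hirr : Irrational α) (h0 : 0 < α) (h1 : α < 1) (r : ℕ) (c0 : ℝ)
    (hcost : 1/pr α r + (qp α r:ℝ) * (2 + Real.log (qp α r)) ≤ c0 * (qp α r:ℝ))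
    (m0 : ℕ) (hbase : ∑ s ∈ Finset.Ioc 0 m0, 1/Int.fract ((s:ℝ)*α) ≤ c0 * (m0:ℝ)) :
    ∀ b, m0 + b * qp α r < qp α (r+1) →
      ∑ s ∈ Finset.Ioc 0 (m0 + b * qp α r), 1/Int.fract ((s:ℝ)*α)
        ≤ c0 * ((m0 + b * qp α r : ℕ):ℝ) := by
  intro b
  induction b with
  | zero => intro _; simpa using hbase
  | succ b ihb =>
      intro hlt
      have hq := qp_pos hirr h0 h1 r
      have hmul : b * qp α r ≤ (b+1) * qp α r := Nat.mul_le_mul_right _ (by omega)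
      have hb : m0 + b * qp α r < qp α (r+1) := by omega
      have ih2 := ihb hb
      have heq : m0 + (b+1) * qp α r = (m0 + b * qp α r) + qp α r := by ring
      rw [heq]
      have hsplit := Finset.sum_Ioc_consecutive (fun s => 1/Int.fract ((s:ℝ)*α))
        (Nat.zero_le (m0 + b * qp α r)) (Nat.le_add_right (m0 + b * qp α r) (qp α r))
      rw [← hsplit]
      have hbl := block hirr h0 h1 r (m0 + b * qp α r) (by omega)
      have hstep : ∑ s ∈ Finset.Ioc (m0 + b * qp α r) ((m0 + b * qp α r) + qp α r),
          1/Int.fract ((s:ℝ)*α) ≤ c0 * (qp α r:ℝ) := le_trans hbl hcost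
      have := add_le_add ih2 hstep
      calc (∑ s ∈ Finset.Ioc 0 (m0 + b * qp α r), 1/Int.fract ((s:ℝ)*α))
            + ∑ s ∈ Finset.Ioc (m0 + b * qp α r) ((m0 + b * qp α r) + qp α r),
                1/Int.fract ((s:ℝ)*α)
          ≤ c0 * ((m0 + b * qp α r : ℕ):ℝ) + c0 * (qp α r:ℝ) := this
        _ = c0 * (((m0 + b * qp α r) + qp α r : ℕ):ℝ) := by push_cast; ring

lemma main_ind (hirr : Irrational α) (h0 : 0 < α) (h1 : α < 1) (c0 : ℝ) (n : ℕ)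
    (hcost : ∀ r, r ≤ n → 1/pr α r + (qp α r:ℝ) * (2 + Real.log (qp α r)) ≤ c0 * (qp α r:ℝ)) :
    ∀ r, r ≤ n → ∀ M, M < qp α (r+1) →
      ∑ s ∈ Finset.Ioc 0 M, 1/Int.fract ((s:ℝ)*α) ≤ c0 * (M:ℝ) := by
  intro r
  induction r with
  | zero =>
      intro h0n M hM
      have h := inner_loop hirr h0 h1 0 c0 (hcost 0 h0n) 0 (by simp) M
        (by simpa [show qp α 0 = 1 from rfl] using hM)
      simpa [show qp α 0 = 1 from rfl] using h
  | succ k ih =>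
      intro hkn M hM
      have hq := qp_pos hirr h0 h1 (k+1)
      have hm0 : M % qp α (k+1) < qp α (k+1) := Nat.mod_lt _ hq
      have hbase := ih (by omega) (M % qp α (k+1)) hm0
      have hML : M % qp α (k+1) + (M / qp α (k+1)) * qp α (k+1) = M := Nat.mod_add_div' M _
      have h := inner_loop hirr h0 h1 (k+1) c0 (hcost (k+1) hkn) (M % qp α (k+1)) hbase
        (M / qp α (k+1)) (by rw [hML]; exact hM)
      rw [hML] at h
      exact h

end S16
end chunk5


/-- Upper bound for the sum of reciprocals of fractional parts: with `n = ostN α N` and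
`A_{n+1} = max_{0 ≤ r ≤ n} q_{r+1}/q_r`,
`Σ_{r=1}^N 1/{rα} < N·log q_n + (N + q_n)·A_{n+1} + (2N + 3q_n)`. -/
theorem stmt16 (α : ℝ) (hirr : Irrational α) (h0 : 0 < α) (h1 : α < 1)
    (N : ℕ) (hN : 1 ≤ N) :
    ∑ r ∈ Finset.Icc 1 N, 1 / Int.fract ((r : ℝ) * α) <
      (N : ℝ) * Real.log (qp α (ostN α N)) +
      ((N : ℝ) + (qp α (ostN α N) : ℝ)) *
        ((Finset.Icc 0 (ostN α N)).sup' (Finset.nonempty_Icc.mpr (Nat.zero_le _))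
          (fun r => (qp α (r + 1) : ℝ) / (qp α r : ℝ))) +
      (2 * (N : ℝ) + 3 * (qp α (ostN α N) : ℝ)) := by
  classical
  set n := ostN α N with hn
  set A := ((Finset.Icc 0 n).sup' (Finset.nonempty_Icc.mpr (Nat.zero_le _))
      (fun r => (qp α (r + 1) : ℝ) / (qp α r : ℝ))) with hA
  have hqpos : ∀ r : ℕ, (0:ℝ) < (qp α r : ℝ) := by
    intro r
    exact_mod_cast S16.qp_pos hirr h0 h1 r
  have hAge : ∀ r, r ≤ n → (qp α (r+1):ℝ) ≤ A * (qp α r : ℝ) := by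
    intro r hr
    have hmem : r ∈ Finset.Icc 0 n := Finset.mem_Icc.mpr ⟨Nat.zero_le _, hr⟩
    have := Finset.le_sup' (fun r => (qp α (r + 1) : ℝ) / (qp α r : ℝ)) hmem
    rw [← hA] at this
    have := (div_le_iff₀ (hqpos r)).mp this
    linarith
  have hlogn : ∀ r, r ≤ n → Real.log (qp α r : ℝ) ≤ Real.log (qp α n : ℝ) :=
    fun r hr => S16.log_cast_mono _ _ (S16.qp_mono hirr h0 h1 hr)
  set c0 : ℝ := A + 3 + Real.log (qp α n : ℝ) with hc0def
  have hcost : ∀ r, r ≤ n →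
      1/S16.pr α r + (qp α r:ℝ) * (2 + Real.log (qp α r)) ≤ c0 * (qp α r:ℝ) := by
    intro r hr
    have h1' := S16.inv_pr_lt hirr h0 h1 r
    have h2 := hAge r hr
    have h3 := hlogn r hr
    have h4 : (1:ℝ) ≤ (qp α r : ℝ) := by exact_mod_cast S16.qp_pos hirr h0 h1 r
    have h5 : (qp α r:ℝ) * (2 + Real.log (qp α r)) ≤ (qp α r:ℝ) * (2 + Real.log (qp α n : ℝ)) := by
      apply mul_le_mul_of_nonneg_left _ (by linarith)
      linarith
    rw [hc0def]
    nlinarith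
  have hNlt : N < qp α (n + 1) := by
    rcases Nat.lt_or_ge n N with h | h
    · have hng := Nat.findGreatest_is_greatest (P := fun r => qp α r ≤ N)
        (show ostN α N < n + 1 by omega) (by omega)
      simp only [not_le] at hng
      exact hng
    · have hle : n ≤ N := Nat.findGreatest_le (P := fun r => qp α r ≤ N) N
      have hnN : n = N := le_antisymm hle h
      have := S16.qp_ge hirr h0 h1 (n+1)
      omega
  have hmain := S16.main_ind hirr h0 h1 c0 n hcost n le_rfl N hNlt
  have hIcc : Finset.Icc 1 N = Finset.Ioc 0 N := by
    rw [← Finset.Icc_add_one_left_eq_Ioc, zero_add]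
  rw [hIcc]
  apply lt_of_le_of_lt hmain
  -- c0 * N < N log q_n + (N + q_n) A + (2N + 3 q_n)
  have hq1n := hAge n le_rfl
  have hNR : (N:ℝ) < (qp α (n+1) : ℝ) := by exact_mod_cast hNlt
  have hqn1 : (1:ℝ) ≤ (qp α n : ℝ) := by exact_mod_cast S16.qp_pos hirr h0 h1 n
  have hNR1 : (1:ℝ) ≤ (N:ℝ) := by exact_mod_cast hN
  rw [hc0def]
  nlinarith
end

section
/- Let α ∈ (0,1) be irrational, let n ≥ 1 be an index with q_n ≥ 2, and let b be an integer with 1 ≤ b ≤ a_{n+1}. Then Σ_{r=1}^{b·q_n} 1/‖r·α‖ > q'_{n+1}·max(1, log(1 + b)) + b·q_n·( 2·max(1, log q_n) − (1 + 2·log 2) ). -/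
open Finset

lemma trapezoid {u : ℝ} (hu : 1 ≤ u) : Real.log u ≤ (u - 1/u)/2 := by
  have h0 : (0:ℝ) < u := lt_of_lt_of_le one_pos hu
  have ht : 0 ≤ Real.log u := Real.log_nonneg hu
  have h2 := (Real.self_le_sinh_iff).2 ht
  rw [Real.sinh_eq, Real.exp_log h0, Real.exp_neg, Real.exp_log h0] at h2
  calc Real.log u ≤ (u - u⁻¹)/2 := h2
    _ = (u - 1/u)/2 := by ring

noncomputable def Hsum (m : ℕ) : ℝ := ∑ k ∈ Finset.range m, 1/((k:ℝ)+1)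

lemma Hsum_ge (m : ℕ) : Real.log (m+1) + 1/2 - 1/(2*((m:ℝ)+1)) ≤ Hsum m := by
  induction m with
  | zero => simp [Hsum]
  | succ m ih =>
    have hm1 : (0:ℝ) < (m:ℝ)+1 := by positivity
    have hm2 : (0:ℝ) < (m:ℝ)+2 := by positivity
    have key : Real.log (((m:ℝ)+2)/((m:ℝ)+1)) ≤ 1/(2*((m:ℝ)+1)) + 1/(2*((m:ℝ)+2)) := by
      have h1 : (1:ℝ) ≤ ((m:ℝ)+2)/((m:ℝ)+1) := by
        rw [le_div_iff₀ hm1]; linarith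
      have h2 := trapezoid h1
      have h3 : (((m:ℝ)+2)/((m:ℝ)+1) - 1/(((m:ℝ)+2)/((m:ℝ)+1)))/2
          = 1/(2*((m:ℝ)+1)) + 1/(2*((m:ℝ)+2)) := by
        field_simp
        ring
      linarith [h2, h3.le, h3.ge]
    have hlog : Real.log ((m:ℝ)+2) = Real.log (((m:ℝ)+2)/((m:ℝ)+1)) + Real.log ((m:ℝ)+1) := by
      rw [Real.log_div (by positivity) (by positivity)]; ring
    have hH : Hsum (m+1) = Hsum m + 1/((m:ℝ)+1) := by
      simp [Hsum, Finset.sum_range_succ]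
    rw [hH]
    have e1 : ((m:ℝ)+1+1) = (m:ℝ)+2 := by ring
    push_cast
    rw [e1]
    have hrel : 1/((m:ℝ)+1) = 2*(1/(2*((m:ℝ)+1))) := by
      field_simp
    linarith [key, hlog, ih, hrel]

lemma Hsum_mono {a b : ℕ} (h : a ≤ b) : Hsum a ≤ Hsum b := by
  apply Finset.sum_le_sum_of_subset_of_nonneg (Finset.range_subset_range.2 h)
  intro i _ _; positivity

lemma Hsum_ge_max {b : ℕ} (hb : 1 ≤ b) : max 1 (Real.log (1 + (b:ℝ))) ≤ Hsum b := by
  apply max_le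
  · have : Hsum 1 = 1 := by simp [Hsum]
    linarith [Hsum_mono hb]
  · have h := Hsum_ge b
    have : (0:ℝ) < 2*((b:ℝ)+1) := by positivity
    have h2 : 1/(2*((b:ℝ)+1)) ≤ 1/2 := by
      rw [div_le_div_iff₀ this two_pos]; push_cast; nlinarith [Nat.cast_nonneg (α := ℝ) b]
    have : Real.log (1 + (b:ℝ)) = Real.log ((b:ℝ)+1) := by ring_nf
    linarith [h, h2]

lemma sum_Ico_inv : ∀ m : ℕ, ∑ j ∈ Finset.Ico 1 (m+1), 1/((j:ℝ)+1) = Hsum (m+1) - 1 := by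
  intro m
  have h : Hsum (m+1) = (∑ j ∈ Finset.Ico (0:ℕ) 1, 1/((j:ℝ)+1)) + ∑ j ∈ Finset.Ico 1 (m+1), 1/((j:ℝ)+1) := by
    rw [Finset.sum_Ico_consecutive (fun j => 1/((j:ℝ)+1)) (by norm_num) (by omega)]
    simp only [Hsum, Finset.range_eq_Ico]
  have h01 : ∑ x ∈ Finset.Ico (0:ℕ) 1, 1/((x:ℝ)+1) = 1 := by norm_num
  rw [h, h01]; ring

lemma sum_min_split (q : ℕ) (hq : 2 ≤ q) :
    ∑ j ∈ Finset.Ico 1 q, 1/(((min j (q - j) : ℕ) : ℝ) + 1)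
      = (Hsum (q/2+1) - 1) + (Hsum ((q-1)/2+1) - 1) := by
  set h1 := q/2 with hh1
  set h2 := (q-1)/2 with hh2
  have hsplit : ∑ j ∈ Finset.Ico 1 q, 1/(((min j (q - j) : ℕ) : ℝ) + 1)
      = (∑ j ∈ Finset.Ico 1 (h1+1), 1/(((min j (q - j) : ℕ) : ℝ) + 1))
        + ∑ j ∈ Finset.Ico (h1+1) q, 1/(((min j (q - j) : ℕ) : ℝ) + 1) := by
    rw [Finset.sum_Ico_consecutive _ (by omega) (by omega)]
  have hfirst : ∑ j ∈ Finset.Ico 1 (h1+1), 1/(((min j (q - j) : ℕ) : ℝ) + 1)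
      = ∑ j ∈ Finset.Ico 1 (h1+1), 1/((j:ℝ)+1) := by
    apply Finset.sum_congr rfl
    intro j hj
    simp only [Finset.mem_Ico] at hj
    have : min j (q - j) = j := by omega
    rw [this]
  have hsecond : ∑ j ∈ Finset.Ico (h1+1) q, 1/(((min j (q - j) : ℕ) : ℝ) + 1)
      = ∑ k ∈ Finset.Ico 1 (h2+1), 1/((k:ℝ)+1) := by
    apply Finset.sum_nbij' (fun j => q - j) (fun k => q - k)
    · intro j hj; simp only [Finset.mem_Ico] at *; omega
    · intro k hk; simp only [Finset.mem_Ico] at *; omega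
    · intro j hj; simp only [Finset.mem_Ico] at hj; omega
    · intro k hk; simp only [Finset.mem_Ico] at hk; omega
    · intro j hj
      simp only [Finset.mem_Ico] at hj
      have e : min j (q - j) = q - j := by omega
      rw [e]
  rw [hsplit, hfirst, hsecond, sum_Ico_inv h1, sum_Ico_inv h2]

lemma sum_min_bound (q : ℕ) (hq : 2 ≤ q) :
    2 * max 1 (Real.log q) - (1 + 2*Real.log 2)
      ≤ ∑ j ∈ Finset.Ico 1 q, 1/(((min j (q - j) : ℕ) : ℝ) + 1) := by
  rw [sum_min_split q hq]
  set h1 := q/2 with hh1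
  set h2 := (q-1)/2 with hh2
  have hlog2 : (0.6931471803 : ℝ) < Real.log 2 := Real.log_two_gt_d9
  have hqR : (2:ℝ) ≤ (q:ℝ) := by exact_mod_cast hq
  have hq0 : (0:ℝ) < q := by linarith
  -- lower bounds on Hsum parts
  have hb1 : Real.log ((h1:ℝ)+2) + 1/2 - 1/(2*((h1:ℝ)+2)) ≤ Hsum (h1+1) := by
    have := Hsum_ge (h1+1); push_cast at this ⊢
    convert this using 3 <;> ring
  have hb2 : Real.log ((h2:ℝ)+2) + 1/2 - 1/(2*((h2:ℝ)+2)) ≤ Hsum (h2+1) := by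
    have := Hsum_ge (h2+1); push_cast at this ⊢
    convert this using 3 <;> ring
  -- size facts
  have hx1 : ((q:ℝ)+2)/2 ≤ (h1:ℝ)+2 := by
    have : q + 2 ≤ 2*h1 + 4 := by omega
    have := (Nat.cast_le (α := ℝ)).2 this
    push_cast at this; linarith
  have hx2 : ((q:ℝ)+2)/2 ≤ (h2:ℝ)+2 := by
    have : q + 2 ≤ 2*h2 + 4 := by omega
    have := (Nat.cast_le (α := ℝ)).2 this
    push_cast at this; linarith
  have hq2pos : (0:ℝ) < ((q:ℝ)+2)/2 := by linarith
  have hA : (0:ℝ) ≤ Hsum (h1+1) - 1 + (Hsum (h2+1) - 1) - (2*1 - (1+2*Real.log 2)) := by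
    have hm1 : Hsum 2 ≤ Hsum (h1+1) := Hsum_mono (by omega)
    have hm2 : Hsum 1 ≤ Hsum (h2+1) := Hsum_mono (by omega)
    have e1 : Hsum 2 = 3/2 := by norm_num [Hsum, Finset.sum_range_succ]
    have e2 : Hsum 1 = 1 := by norm_num [Hsum]
    linarith
  have hB : (0:ℝ) ≤ Hsum (h1+1) - 1 + (Hsum (h2+1) - 1) - (2*Real.log q - (1+2*Real.log 2)) := by
    have hl1 : Real.log (((q:ℝ)+2)/2) ≤ Real.log ((h1:ℝ)+2) :=
      Real.log_le_log hq2pos hx1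
    have hl2 : Real.log (((q:ℝ)+2)/2) ≤ Real.log ((h2:ℝ)+2) :=
      Real.log_le_log hq2pos hx2
    have he1 : Real.log (((q:ℝ)+2)/2) = Real.log ((q:ℝ)+2) - Real.log 2 :=
      Real.log_div (by positivity) (by norm_num)
    have hlogd : 2/((q:ℝ)+2) ≤ Real.log ((q:ℝ)+2) - Real.log q := by
      have hy : (0:ℝ) < ((q:ℝ)+2)/q := by positivity
      have := Real.one_sub_inv_le_log_of_pos hy
      have hinv : (((q:ℝ)+2)/q)⁻¹ = q/((q:ℝ)+2) := by rw [inv_div]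
      rw [hinv, Real.log_div (by positivity) (by positivity)] at this
      have heq : 1 - (q:ℝ)/((q:ℝ)+2) = 2/((q:ℝ)+2) := by
        field_simp
        ring
      linarith [this, heq]
    have hc1 : 1/(2*((h1:ℝ)+2)) ≤ 1/((q:ℝ)+2) := by
      apply one_div_le_one_div_of_le (by linarith) (by linarith)
    have hc2 : 1/(2*((h2:ℝ)+2)) ≤ 1/((q:ℝ)+2) := by
      apply one_div_le_one_div_of_le (by linarith) (by linarith)
    have hd : (0:ℝ) < 2/((q:ℝ)+2) := by positivity
    have hq12 : 2/((q:ℝ)+2) = 2*(1/((q:ℝ)+2)) := by ring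
    linarith [hb1, hb2, hl1, hl2, he1, hlogd, hc1, hc2, hd, hq12]
  rcases le_total (Real.log q) 1 with hc | hc
  · rw [max_eq_left hc]; linarith
  · rw [max_eq_right hc]; linarith













/-- shifted quasiperiods : `qq α n = q_{n-1}` -/
noncomputable def qq (α : ℝ) : ℕ → ℕ
  | 0 => 0
  | n + 1 => qp α n

/-- shifted numerators : `pp α n = p_{n-1}` -/
noncomputable def pp (α : ℝ) : ℕ → ℕ
  | 0 => 1
  | n + 1 => pn α n

section CF
variable {α : ℝ} (hirr : Irrational α) (h0 : 0 < α) (h1 : α < 1)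
include hirr h0 h1

lemma cq_irrational : ∀ n, Irrational (cq α n)
  | 0 => hirr
  | n+1 => by
    have ih := cq_irrational (n := n)
    have h : Irrational (cq α n - (⌊cq α n⌋:ℝ)) := ih.sub_intCast _
    have := h.inv
    simpa [cq, one_div] using this

lemma fract_cq_pos (n : ℕ) : 0 < Int.fract (cq α n) := by
  rcases lt_or_eq_of_le (Int.fract_nonneg (cq α n)) with h | h
  · exact h
  · exfalso
    have : cq α n = (⌊cq α n⌋ : ℝ) := by
      have := Int.fract_add_floor (cq α n)
      rw [← h] at this; linarith [this]
    exact (cq_irrational hirr h0 h1 n).ne_int _ this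

lemma cq_succ_gt_one (n : ℕ) : 1 < cq α (n+1) := by
  have h2 := fract_cq_pos hirr h0 h1 (α := α) n
  have h3 : Int.fract (cq α n) < 1 := Int.fract_lt_one _
  have : cq α (n+1) = 1 / Int.fract (cq α n) := by
    rw [cq, Int.fract]
  rw [this]
  rw [lt_div_iff₀ h2]; linarith

lemma cq_pos : ∀ n, 0 < cq α n
  | 0 => h0
  | n+1 => lt_trans one_pos (cq_succ_gt_one hirr h0 h1 n)

lemma aq_cast : ∀ n, ((aq α n : ℤ)) = ⌊cq α n⌋ := by
  intro n
  rw [aq, Int.toNat_of_nonneg]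
  cases n with
  | zero =>
    have : ⌊cq α 0⌋ = 0 := by
      rw [show cq α 0 = α from rfl, Int.floor_eq_zero_iff]
      constructor
      · exact h0.le
      · exact h1
    simp [this]
  | succ n =>
    have := cq_succ_gt_one hirr h0 h1 (α := α) n
    have : (1:ℤ) ≤ ⌊cq α (n+1)⌋ := by
      rw [Int.le_floor]; exact_mod_cast this.le
    omega

lemma aq_succ_pos (n : ℕ) : 1 ≤ aq α (n+1) := by
  have h := aq_cast hirr h0 h1 (α := α) (n+1)
  have := cq_succ_gt_one hirr h0 h1 (α := α) n
  have h2 : (1:ℤ) ≤ ⌊cq α (n+1)⌋ := by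
    rw [Int.le_floor]; exact_mod_cast this.le
  omega

lemma cq_eq (n : ℕ) : cq α n = (aq α n : ℝ) + 1 / cq α (n+1) := by
  have hf := fract_cq_pos hirr h0 h1 (α := α) n
  have hcq : cq α (n+1) = 1 / Int.fract (cq α n) := by rw [cq, Int.fract]
  have : 1 / cq α (n+1) = Int.fract (cq α n) := by
    rw [hcq]; field_simp
  rw [this]
  have hc := aq_cast hirr h0 h1 (α := α) n
  have : ((aq α n : ℝ)) = ((⌊cq α n⌋ : ℤ) : ℝ) := by exact_mod_cast congrArg (fun z : ℤ => (z:ℝ)) hc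
  rw [this, Int.fract]; ring

lemma qp_pos : ∀ n, 0 < qp α n
  | 0 => one_pos
  | 1 => aq_succ_pos hirr h0 h1 0
  | n+2 => by
    have h2 := qp_pos n
    rw [qp]
    omega

omit hirr h0 h1 in
lemma qp_succ (n : ℕ) : qp α (n+1) = aq α (n+1) * qp α n + qq α n := by
  cases n with
  | zero => simp [qp, qq]
  | succ n => rfl

omit hirr h0 h1 in
lemma pn_succ (n : ℕ) : pn α (n+1) = aq α (n+1) * pn α n + pp α n := by
  cases n with
  | zero => simp [pn, pp]
  | succ n => rfl

omit hirr h0 h1 in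
lemma qe_succ (n : ℕ) : qe α (n+1) = cq α (n+1) * (qp α n : ℝ) + (qq α n : ℝ) := by
  cases n with
  | zero => simp [qe, qq, qp]
  | succ n => rfl

lemma key_id : ∀ n, α * (cq α (n+1) * (qp α n : ℝ) + (qq α n : ℝ))
    = cq α (n+1) * (pn α n : ℝ) + (pp α n : ℝ) := by
  intro n
  induction n with
  | zero =>
    have hfloor : (⌊α⌋ : ℝ) = 0 := by
      have : ⌊α⌋ = 0 := by
        rw [Int.floor_eq_zero_iff]
        exact ⟨h0.le, h1⟩
      simp [this]
    have : cq α 1 = 1/α := by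
      rw [show cq α 1 = 1/(cq α 0 - (⌊cq α 0⌋:ℝ)) from rfl,
        show cq α 0 = α from rfl, hfloor]
      ring_nf
    simp only [qp, qq, pn, pp, this]
    push_cast
    field_simp
    ring
  | succ n ih =>
    have hc : cq α (n+1) * cq α (n+2) = (aq α (n+1) : ℝ) * cq α (n+2) + 1 := by
      have hne : cq α (n+2) ≠ 0 := ne_of_gt (cq_pos hirr h0 h1 (n+2))
      rw [cq_eq hirr h0 h1 (n+1)]
      field_simp
    rw [qp_succ, pn_succ]
    show α * (cq α (n+2) * ((aq α (n+1) * qp α n + qq α n : ℕ) : ℝ) + (qp α n : ℝ))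
      = cq α (n+2) * ((aq α (n+1) * pn α n + pp α n : ℕ) : ℝ) + (pn α n : ℝ)
    push_cast
    push_cast at ih
    linear_combination cq α (n+2) * ih - (α * (qp α n : ℝ) - (pn α n : ℝ)) * hc

lemma det_id : ∀ n, (pn α n : ℤ) * (qq α n : ℤ) - (pp α n : ℤ) * (qp α n : ℤ) = (-1)^(n+1) := by
  intro n
  induction n with
  | zero => simp [pn, qq, pp, qp]
  | succ n ih =>
    rw [qp_succ, pn_succ]
    show ((aq α (n+1) * pn α n + pp α n : ℕ) : ℤ) * (qp α n : ℤ)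
      - (pn α n : ℤ) * ((aq α (n+1) * qp α n + qq α n : ℕ) : ℤ) = (-1)^(n+2)
    push_cast
    push_cast at ih
    linear_combination (-1 : ℤ) * ih

lemma coprime_pq (n : ℕ) : Nat.Coprime (qp α n) (pn α n) := by
  have h := det_id hirr h0 h1 (α := α) n
  have hcop : IsCoprime ((qp α n : ℤ)) ((pn α n : ℤ)) := by
    rcases Nat.even_or_odd (n+1) with he | ho
    · refine ⟨-(pp α n : ℤ), (qq α n : ℤ), ?_⟩
      rw [he.neg_one_pow] at h
      linarith [h]
    · refine ⟨(pp α n : ℤ), -(qq α n : ℤ), ?_⟩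
      rw [ho.neg_one_pow] at h
      linarith [h]
  have := Int.isCoprime_iff_gcd_eq_one.mp hcop
  rwa [Int.gcd_natCast_natCast] at this

lemma err_id (n : ℕ) : (α * (qp α n : ℝ) - (pn α n : ℝ)) * qe α (n+1) = (-1)^n := by
  have h5 := key_id hirr h0 h1 (α := α) n
  have hd := det_id hirr h0 h1 (α := α) n
  have hdR : ((pn α n : ℝ)) * (qq α n : ℝ) - (pp α n : ℝ) * (qp α n : ℝ) = (-1)^(n+1) := by
    exact_mod_cast congrArg (fun z : ℤ => (z : ℝ)) hd
  rw [qe_succ]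
  linear_combination (qp α n : ℝ) * h5 - hdR

lemma qe_pos (n : ℕ) : 0 < qe α (n+1) := by
  rw [qe_succ]
  have h2 := cq_pos hirr h0 h1 (n+1)
  have h3 := qp_pos hirr h0 h1 (α := α) n
  have h4 : (0:ℝ) < (qp α n : ℝ) := by exact_mod_cast h3
  have h5 : (0:ℝ) ≤ (qq α n : ℝ) := by positivity
  nlinarith

lemma err_abs (n : ℕ) : |α * (qp α n : ℝ) - (pn α n : ℝ)| * qe α (n+1) = 1 := by
  have h := err_id hirr h0 h1 (α := α) n
  have hQ := qe_pos hirr h0 h1 (α := α) n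
  have := abs_eq_abs.mpr (Or.inl h)
  rw [abs_mul, abs_of_pos hQ, abs_pow, abs_neg, abs_one, one_pow] at this
  exact this

lemma qe_gt (n b : ℕ) (hb : b ≤ aq α (n+1)) : (b : ℝ) * (qp α n : ℝ) < qe α (n+1) := by
  rw [qe_succ]
  have hc := cq_eq hirr h0 h1 (n+1)
  have hc2 := cq_pos hirr h0 h1 (n+2)
  have hbound : (b : ℝ) < cq α (n+1) := by
    have h2 : (b : ℝ) ≤ (aq α (n+1) : ℝ) := by exact_mod_cast hb
    have h3 : (0:ℝ) < 1 / cq α (n+2) := by positivity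
    linarith [hc]
  have h4 : (0:ℝ) < (qp α n : ℝ) := by exact_mod_cast qp_pos hirr h0 h1 (α := α) n
  have h5 : (0:ℝ) ≤ (qq α n : ℝ) := by positivity
  nlinarith

end CF

lemma block_sum (q b : ℕ) (hq : 0 < q) (f : ℕ → ℝ) :
    ∑ r ∈ Finset.Icc 1 (b*q), f r = ∑ m ∈ Finset.range b, ∑ r ∈ Finset.Ioc (m*q) (m*q+q), f r := by
  induction b with
  | zero => simp
  | succ b ih =>
    rw [Finset.sum_range_succ, ← ih]
    have h1 : Finset.Icc 1 ((b+1)*q) = Finset.Ioc 0 ((b+1)*q) := by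
      rw [← Finset.Icc_add_one_left_eq_Ioc, zero_add]
    have h2 : Finset.Icc 1 (b*q) = Finset.Ioc 0 (b*q) := by
      rw [← Finset.Icc_add_one_left_eq_Ioc, zero_add]
    rw [h1, h2, ← Finset.sum_Ioc_consecutive f (by omega : 0 ≤ b*q)
      (by nlinarith : b*q ≤ (b+1)*q)]
    congr 2
    ring


/-- Lower bound for the sum of reciprocal distances to the nearest integer along a block
of quasiperiod length: for `n ≥ 1` with `q_n ≥ 2` and `1 ≤ b ≤ a_{n+1}`,
`Σ_{r=1}^{b·q_n} 1/‖rα‖ > q'_{n+1}·max(1, log(1+b)) + b·q_n·(2·max(1, log q_n) − (1+2·log 2))`. -/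
theorem stmt17 (α : ℝ) (hirr : Irrational α) (h0 : 0 < α) (h1 : α < 1)
    (n : ℕ) (hn : 1 ≤ n) (hq : 2 ≤ qp α n)
    (b : ℕ) (hb1 : 1 ≤ b) (hb2 : b ≤ aq α (n + 1)) :
    qe α (n + 1) * max 1 (Real.log (1 + (b : ℝ))) +
        (b : ℝ) * (qp α n : ℝ) *
          (2 * max 1 (Real.log (qp α n)) - (1 + 2 * Real.log 2)) <
      ∑ r ∈ Finset.Icc 1 (b * qp α n),
        1 / |(r : ℝ) * α - (round ((r : ℝ) * α) : ℤ)| := by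
  have hq0 : 0 < qp α n := by omega
  set q := qp α n with hqdef
  set p := pn α n with hpdef
  set Q := qe α (n+1) with hQdef
  have hQpos : 0 < Q := qe_pos hirr h0 h1 n
  have hqR : (0:ℝ) < (q:ℝ) := by exact_mod_cast hq0
  have habs : |α * q - p| * Q = 1 := err_abs hirr h0 h1 n
  have hQb : (b:ℝ) * q < Q := qe_gt hirr h0 h1 n b hb2
  have hcop : Nat.Coprime q p := coprime_pq hirr h0 h1 n
  have hdel : |α * (q:ℝ) - (p:ℝ)| = 1/Q := by
    field_simp
    linarith [habs]
  -- distances are positive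
  have hdistpos : ∀ r : ℕ, 1 ≤ r → 0 < |(r : ℝ) * α - (round ((r : ℝ) * α) : ℤ)| := by
    intro r hr
    have hirr2 : Irrational ((r:ℝ) * α) := hirr.natCast_mul (by omega)
    have := hirr2.ne_int (round ((r : ℝ) * α))
    have hne : (r : ℝ) * α - (round ((r : ℝ) * α) : ℤ) ≠ 0 := sub_ne_zero.mpr this
    exact abs_pos.mpr hne
  -- comparison function
  set g : ℕ → ℝ := fun r => if q ∣ r then Q / ((r / q : ℕ) : ℝ)
    else (q:ℝ) / (((min (r*p % q) (q - r*p % q) : ℕ) : ℝ) + 1) with hgdef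
  -- pointwise bounds
  have hmul : ∀ r : ℕ, 1 ≤ r → r ≤ b*q → q ∣ r →
      Q / ((r / q : ℕ) : ℝ) ≤ 1 / |(r : ℝ) * α - (round ((r : ℝ) * α) : ℤ)| := by
    intro r hr1 hr2 hdvd
    obtain ⟨s, hs⟩ := hdvd
    have hs1 : 1 ≤ s := by
      rcases Nat.eq_zero_or_pos s with h | h
      · subst h; simp at hs; omega
      · exact h
    have hsq : r / q = s := by rw [hs]; exact Nat.mul_div_cancel_left s hq0
    have hsR : (0:ℝ) < (s:ℝ) := by exact_mod_cast hs1
    set d := |(r : ℝ) * α - (round ((r : ℝ) * α) : ℤ)| with hd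
    have hdpos : 0 < d := hdistpos r hr1
    have hkey : d ≤ (s:ℝ) / Q := by
      have hround := round_le ((r:ℝ) * α) ((s * p : ℕ) : ℤ)
      have he : (r : ℝ) * α - (((s * p : ℕ) : ℤ) : ℝ) = (s:ℝ) * (α * (q:ℝ) - (p:ℝ)) := by
        push_cast [hs]
        ring
      rw [he, abs_mul, abs_of_pos hsR, hdel] at hround
      calc d ≤ (s:ℝ) * (1/Q) := hround
        _ = (s:ℝ)/Q := by ring
    rw [hsq, div_le_div_iff₀ hsR hdpos]
    calc Q * d ≤ Q * ((s:ℝ)/Q) := mul_le_mul_of_nonneg_left hkey hQpos.le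
      _ = (s:ℝ) := by field_simp
      _ = 1 * (s:ℝ) := by ring
  have hnon : ∀ r : ℕ, 1 ≤ r → r ≤ b*q → ¬ q ∣ r →
      (q:ℝ) / (((min (r*p % q) (q - r*p % q) : ℕ) : ℝ) + 1)
        < 1 / |(r : ℝ) * α - (round ((r : ℝ) * α) : ℤ)| := by
    intro r hr1 hr2 hnd
    set d := |(r : ℝ) * α - (round ((r : ℝ) * α) : ℤ)| with hd
    have hdpos : 0 < d := hdistpos r hr1
    set j := r*p % q with hjdef
    set j' := r*p / q with hj'def
    have hj0 : j ≠ 0 := by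
      intro h
      exact hnd (hcop.dvd_of_dvd_mul_right (Nat.dvd_of_mod_eq_zero h))
    have hjq : j < q := Nat.mod_lt _ hq0
    have e : q * j' + j = r*p := Nat.div_add_mod (r*p) q
    have ec : (q:ℝ) * (j':ℝ) + (j:ℝ) = (r:ℝ) * (p:ℝ) := by exact_mod_cast e
    have hre : (r:ℝ) * |α * (q:ℝ) - (p:ℝ)| < 1 := by
      rw [hdel]
      have hrR : (r:ℝ) ≤ (b:ℝ) * (q:ℝ) := by exact_mod_cast hr2
      rw [mul_one_div, div_lt_one hQpos]
      linarith
    have habs_nn : 0 ≤ (r:ℝ) * |α * (q:ℝ) - (p:ℝ)| := by positivity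
    by_cases h2j : 2*j ≤ q
    · have hmin : min j (q - j) = j := min_eq_left (by omega)
      have hz : ((r:ℝ)*α - (j':ℝ)) * (q:ℝ) = (j:ℝ) + (r:ℝ)*(α * (q:ℝ) - (p:ℝ)) := by
        linear_combination -ec
      have hb1' : |(r:ℝ)*α - (j':ℝ)| < ((j:ℝ)+1)/(q:ℝ) := by
        rw [lt_div_iff₀ hqR]
        have h2 : |((r:ℝ)*α - (j':ℝ)) * (q:ℝ)| ≤ (j:ℝ) + (r:ℝ)*|α * (q:ℝ) - (p:ℝ)| := by
          rw [hz]
          calc |(j:ℝ) + (r:ℝ)*(α * (q:ℝ) - (p:ℝ))|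
              ≤ |(j:ℝ)| + |(r:ℝ)*(α * (q:ℝ) - (p:ℝ))| := abs_add_le _ _
            _ = (j:ℝ) + (r:ℝ)*|α * (q:ℝ) - (p:ℝ)| := by
                rw [abs_of_nonneg (by positivity : (0:ℝ) ≤ (j:ℝ)), abs_mul,
                  abs_of_nonneg (by positivity : (0:ℝ) ≤ (r:ℝ))]
        rw [abs_mul, abs_of_pos hqR] at h2
        linarith
      have hd_lt : d < ((j:ℝ)+1)/(q:ℝ) := by
        have hr0 := round_le ((r:ℝ)*α) ((j' : ℕ) : ℤ)
        push_cast at hr0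
        exact lt_of_le_of_lt hr0 hb1'
      rw [hmin]
      have hjpos : (0:ℝ) < (j:ℝ)+1 := by positivity
      rw [div_lt_div_iff₀ hjpos hdpos]
      rw [lt_div_iff₀ hqR] at hd_lt
      linarith
    · have hmin : min j (q - j) = q - j := min_eq_right (by omega)
      have hcast : ((q - j : ℕ) : ℝ) = (q:ℝ) - (j:ℝ) := by
        rw [Nat.cast_sub hjq.le]
      have hz : ((r:ℝ)*α - ((j':ℝ)+1)) * (q:ℝ)
          = ((j:ℝ) - (q:ℝ)) + (r:ℝ)*(α * (q:ℝ) - (p:ℝ)) := by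
        linear_combination -ec
      have hb1' : |(r:ℝ)*α - ((j':ℝ)+1)| < ((q:ℝ)-(j:ℝ)+1)/(q:ℝ) := by
        rw [lt_div_iff₀ hqR]
        have h2 : |((r:ℝ)*α - ((j':ℝ)+1)) * (q:ℝ)|
            ≤ ((q:ℝ)-(j:ℝ)) + (r:ℝ)*|α * (q:ℝ) - (p:ℝ)| := by
          rw [hz]
          calc |((j:ℝ) - (q:ℝ)) + (r:ℝ)*(α * (q:ℝ) - (p:ℝ))|
              ≤ |(j:ℝ) - (q:ℝ)| + |(r:ℝ)*(α * (q:ℝ) - (p:ℝ))| := abs_add_le _ _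
            _ = ((q:ℝ)-(j:ℝ)) + (r:ℝ)*|α * (q:ℝ) - (p:ℝ)| := by
                have hjqR : (j:ℝ) ≤ (q:ℝ) := by exact_mod_cast hjq.le
                rw [abs_of_nonpos (by linarith : (j:ℝ) - (q:ℝ) ≤ 0), abs_mul,
                  abs_of_nonneg (by positivity : (0:ℝ) ≤ (r:ℝ))]
                ring
        rw [abs_mul, abs_of_pos hqR] at h2
        linarith
      have hd_lt : d < ((q:ℝ)-(j:ℝ)+1)/(q:ℝ) := by
        have hr0 := round_le ((r:ℝ)*α) (((j' : ℕ) : ℤ) + 1)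
        push_cast at hr0
        exact lt_of_le_of_lt hr0 hb1'
      rw [hmin, hcast]
      have hjpos : (0:ℝ) < (q:ℝ)-(j:ℝ)+1 := by
        have hjqR : (j:ℝ) ≤ (q:ℝ) := by exact_mod_cast hjq.le
        linarith
      rw [div_lt_div_iff₀ hjpos hdpos]
      rw [lt_div_iff₀ hqR] at hd_lt
      linarith
  -- strict sum inequality
  have hbq1 : 1 ≤ b * q := by
    have := Nat.mul_pos hb1 hq0; omega
  have hsum_lt : ∑ r ∈ Finset.Icc 1 (b*q), g r
      < ∑ r ∈ Finset.Icc 1 (b*q), 1 / |(r : ℝ) * α - (round ((r : ℝ) * α) : ℤ)| := by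
    apply Finset.sum_lt_sum
    · intro r hr
      simp only [Finset.mem_Icc] at hr
      by_cases hd : q ∣ r
      · simpa [hgdef, hd] using hmul r hr.1 hr.2 hd
      · simpa [hgdef, hd] using (hnon r hr.1 hr.2 hd).le
    · refine ⟨1, Finset.mem_Icc.mpr ⟨le_refl 1, hbq1⟩, ?_⟩
      have hnd : ¬ q ∣ 1 := by
        intro hdvd
        have := Nat.le_of_dvd one_pos hdvd
        omega
      simpa [hgdef, hnd] using hnon 1 le_rfl hbq1 hnd
  -- block decomposition
  have hblocks : ∑ r ∈ Finset.Icc 1 (b*q), g r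
      = ∑ m ∈ Finset.range b, ∑ r ∈ Finset.Ioc (m*q) (m*q+q), g r := block_sum q b hq0 g
  have hblock : ∀ m, ∑ r ∈ Finset.Ioc (m*q) (m*q+q), g r
      = Q/((m:ℝ)+1) + ∑ j ∈ Finset.Ico 1 q, (q:ℝ)/(((min j (q - j) : ℕ) : ℝ) + 1) := by
    intro m
    have haux : ∀ c : ℕ, c + q = (c + (q-1)) + 1 := fun c => by omega
    rw [haux (m*q), Finset.sum_Ioc_succ_top (Nat.le_add_right _ _)]
    have hgtop : g ((m*q + (q-1)) + 1) = Q/((m:ℝ)+1) := by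
      have he : (m*q + (q-1)) + 1 = (m+1)*q := by
        rw [← haux (m*q)]; ring
      rw [he]
      simp only [hgdef]
      rw [if_pos (dvd_mul_left q (m+1)), Nat.mul_div_cancel _ hq0]
      push_cast
      ring
    rw [hgtop]
    have hsub : ∑ r ∈ Finset.Ioc (m*q) (m*q+(q-1)), g r
        = ∑ j ∈ Finset.Ico 1 q, (q:ℝ)/(((min j (q - j) : ℕ) : ℝ) + 1) := by
      obtain ⟨c, hcd, hceq⟩ : ∃ c : ℕ, q ∣ c ∧ m*q = c := ⟨m*q, dvd_mul_left q m, rfl⟩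
      rw [hceq]
      clear hceq
      have hc0 : c % q = 0 := by
        obtain ⟨mm, hmm⟩ := hcd
        rw [hmm]; exact Nat.mul_mod_right q mm
      have hmod : ∀ r ∈ Finset.Ioc c (c+(q-1)), r % q = r - c := by
        intro r hr
        simp only [Finset.mem_Ioc] at hr
        obtain ⟨t, ht⟩ : ∃ t, r = t + c := ⟨r - c, by omega⟩
        subst ht
        have htlt : t < q := by omega
        rw [Nat.add_sub_cancel, Nat.add_mod, hc0, Nat.add_zero, Nat.mod_eq_of_lt htlt,
          Nat.mod_eq_of_lt htlt]
      have hne : ∀ r ∈ Finset.Ioc c (c+(q-1)), ¬ q ∣ r := by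
        intro r hr hdvd
        have h2 := hmod r hr
        have h3 : r % q = 0 := by
          obtain ⟨t, ht⟩ := hdvd
          rw [ht]; exact Nat.mul_mod_right q t
        simp only [Finset.mem_Ioc] at hr
        omega
      have hgval : ∀ r ∈ Finset.Ioc c (c+(q-1)),
          g r = (q:ℝ)/(((min (r*p % q) (q - r*p % q) : ℕ) : ℝ) + 1) := by
        intro r hr
        simp only [hgdef]
        rw [if_neg (hne r hr)]
      rw [Finset.sum_congr rfl hgval]
      have hinj : ∀ r1 ∈ Finset.Ioc c (c+(q-1)), ∀ r2 ∈ Finset.Ioc c (c+(q-1)),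
          r1*p % q = r2*p % q → r1 = r2 := by
        intro r1 h1 r2 h2 heq
        have hmeq : r1*p ≡ r2*p [MOD q] := heq
        have hcan : r1 ≡ r2 [MOD q] := Nat.ModEq.cancel_right_of_coprime hcop hmeq
        have e1 := hmod r1 h1
        have e2 := hmod r2 h2
        have hmm : r1 % q = r2 % q := hcan
        simp only [Finset.mem_Ioc] at h1 h2
        omega
      have himg : (Finset.Ioc c (c+(q-1))).image (fun r => r*p % q) = Finset.Ico 1 q := by
        apply Finset.eq_of_subset_of_card_le
        · intro j hj
          simp only [Finset.mem_image] at hj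
          obtain ⟨r, hr, rfl⟩ := hj
          simp only [Finset.mem_Ico]
          constructor
          · rcases Nat.eq_zero_or_pos (r*p % q) with h | h
            · exfalso
              apply hne r hr
              apply hcop.dvd_of_dvd_mul_right
              exact Nat.dvd_of_mod_eq_zero h
            · exact h
          · exact Nat.mod_lt _ hq0
        · rw [Finset.card_image_of_injOn (fun r1 h1 r2 h2 => hinj r1 h1 r2 h2),
            Nat.card_Ioc, Nat.card_Ico]
          omega
      rw [← himg, Finset.sum_image hinj]
    rw [hsub]
    ring
  -- final assembly
  have hS' := sum_min_bound q hq
  have hHb := Hsum_ge_max hb1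
  have hsum_eval : ∑ r ∈ Finset.Icc 1 (b*q), g r
      = Q * Hsum b + (b:ℝ) * ∑ j ∈ Finset.Ico 1 q, (q:ℝ)/(((min j (q - j) : ℕ) : ℝ) + 1) := by
    rw [hblocks]
    rw [Finset.sum_congr rfl (fun m _ => hblock m), Finset.sum_add_distrib]
    congr 1
    · rw [Hsum, Finset.mul_sum]
      apply Finset.sum_congr rfl
      intro m _
      rw [mul_one_div]
    · rw [Finset.sum_const, Finset.card_range, nsmul_eq_mul]
  have hfac : ∑ j ∈ Finset.Ico 1 q, (q:ℝ)/(((min j (q - j) : ℕ) : ℝ) + 1)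
      = (q:ℝ) * ∑ j ∈ Finset.Ico 1 q, 1/(((min j (q - j) : ℕ) : ℝ) + 1) := by
    rw [Finset.mul_sum]
    exact Finset.sum_congr rfl (fun j _ => by rw [mul_one_div])
  set S' := ∑ j ∈ Finset.Ico 1 q, 1/(((min j (q - j) : ℕ) : ℝ) + 1) with hS'def
  have e1 : Q * max 1 (Real.log (1 + (b:ℝ))) ≤ Q * Hsum b :=
    mul_le_mul_of_nonneg_left hHb hQpos.le
  have e2 : (b:ℝ) * (q:ℝ) * (2 * max 1 (Real.log (q:ℝ)) - (1 + 2 * Real.log 2))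
      ≤ (b:ℝ) * ((q:ℝ) * S') := by
    have t1 : (q:ℝ) * (2 * max 1 (Real.log (q:ℝ)) - (1 + 2 * Real.log 2)) ≤ (q:ℝ) * S' :=
      mul_le_mul_of_nonneg_left hS' hqR.le
    have hbnn : (0:ℝ) ≤ (b:ℝ) := Nat.cast_nonneg b
    calc (b:ℝ) * (q:ℝ) * (2 * max 1 (Real.log (q:ℝ)) - (1 + 2 * Real.log 2))
        = (b:ℝ) * ((q:ℝ) * (2 * max 1 (Real.log (q:ℝ)) - (1 + 2 * Real.log 2))) := by ring
      _ ≤ (b:ℝ) * ((q:ℝ) * S') := mul_le_mul_of_nonneg_left t1 hbnn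
  rw [hsum_eval, hfac] at hsum_lt
  linarith [hsum_lt, e1, e2]
end
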